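/- arXiv:2404.03955 — 12 statements merged into one kernel-verified Lean document; each statement's English description precedes it below -/
import Mathlib

section
/- Let E₀ ⊆ E be fields, G a group, and V, V' finite-dimensional representations of G over E₀. Assume that the base changes E ⊗_{E₀} V and E ⊗_{E₀} V' are irreducible representations of G over E and are isomorphic as representations of G over E. Then V and V' are isomorphic as representations of G over E₀. In particular, an E₀-model of an absolutely irreducible representation of G over E is unique up to isomorphism if it exists. -/
open scoped TensorProduct

/-- A representation is irreducible if the space is nonzero and the only invariant
subspaces are `⊥` and `⊤`. -/
def IsIrredRep {k G V : Type*} [CommSemiring k] [Monoid G] [AddCommMonoid V] [Module k V]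
    (ρ : Representation k G V) : Prop :=
  Nontrivial V ∧ ∀ W : Submodule k V, (∀ g : G, ∀ v ∈ W, ρ g v ∈ W) → W = ⊥ ∨ W = ⊤

/-- Base change of a representation along a commutative-ring extension `E → F`. -/
noncomputable def repBaseChange {E G V : Type*} [CommSemiring E] [Monoid G]
    [AddCommMonoid V] [Module E V] (F : Type*) [CommSemiring F] [Algebra E F]
    (ρ : Representation E G V) : Representation F G (F ⊗[E] V) :=
  (Module.End.baseChangeHom E F V).toRingHom.toMonoidHom.comp ρ

/-!
Base change along a field extension is faithfully flat, so `p ↦ E ⊗ p` embeds the invariant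
subspaces of `V` into those of `E ⊗ V`; hence irreducibility descends from `E ⊗ V` to `V`.
A nonzero `G`-map `f : E ⊗ V → E ⊗ V'`, restricted to `1 ⊗ V` and followed by a suitable
coordinate functional `E → E₀` on the left tensor factor, gives a nonzero `G`-map `V → V'`
over `E₀`, which is an isomorphism by Schur's lemma.
-/

open TensorProduct Representation

lemma repBaseChange_apply {E G V : Type*} [CommSemiring E] [Monoid G] [AddCommMonoid V]
    [Module E V] (F : Type*) [CommSemiring F] [Algebra E F] (ρ : Representation E G V) (g : G) :
    repBaseChange F ρ g = (ρ g).baseChange F :=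
  rfl

lemma IsIrredRep.isIrreducible {k G V : Type*} [Field k] [Monoid G] [AddCommGroup V]
    [Module k V] {ρ : Representation k G V} (h : IsIrredRep ρ) : ρ.IsIrreducible := by
  have := h.1
  refine { exists_pair_ne := ⟨⊥, ⊤, fun hbot => ?_⟩, eq_bot_or_eq_top := fun W => ?_ }
  · exact bot_ne_top (congrArg Subrepresentation.toSubmodule hbot)
  · exact (h.2 W.toSubmodule fun g _ hv => W.apply_mem_toSubmodule g hv).imp
      (fun hW => Subrepresentation.toSubmodule_injective hW)
      (fun hW => Subrepresentation.toSubmodule_injective hW)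

theorem Submodule.baseChange_le_comap_baseChange {R A M N : Type*} [CommSemiring R]
    [Semiring A] [Algebra R A] [AddCommMonoid M] [Module R M] [AddCommMonoid N] [Module R N]
    {p : Submodule R M} {q : Submodule R N} {f : M →ₗ[R] N} (h : p ≤ q.comap f) :
    p.baseChange A ≤ (q.baseChange A).comap (f.baseChange A) := by
  rw [baseChange_eq_span, span_le]
  rintro - ⟨m, hm, rfl⟩
  exact tmul_mem_baseChange_of_mem 1 (h hm)

lemma IsIrredRep.of_repBaseChange {E₀ E G V : Type*} [Field E₀] [CommRing E] [Nontrivial E]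
    [Algebra E₀ E] [Monoid G] [AddCommGroup V] [Module E₀ V] {ρ : Representation E₀ G V}
    (h : IsIrredRep (repBaseChange E ρ)) : IsIrredRep ρ := by
  refine ⟨(Module.FaithfullyFlat.nontrivial_tensorProduct_iff_right E₀ E).mp h.1, fun p hp => ?_⟩
  have hinv : ∀ g, ∀ x ∈ p.baseChange E, repBaseChange E ρ g x ∈ p.baseChange E :=
    fun g _ hx => Submodule.baseChange_le_comap_baseChange (fun _ hv => hp g _ hv) hx
  rw [← Submodule.baseChange_inj (A := E), ← Submodule.baseChange_inj (A := E) (q := ⊤),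
    Submodule.baseChange_bot, Submodule.baseChange_top]
  exact h.2 _ hinv

lemma exists_lid_rTensor_ne_zero {R M N : Type*} [CommRing R] [AddCommGroup M] [Module R M]
    [Module.Free R M] [AddCommGroup N] [Module R N] {x : M ⊗[R] N} (hx : x ≠ 0) :
    ∃ φ : Module.Dual R M, TensorProduct.lid R N (φ.rTensor N x) ≠ 0 := by
  classical
  let b := Module.Free.chooseBasis R M
  obtain ⟨i, hi⟩ := Finsupp.ne_iff.mp ((equivFinsuppOfBasisLeft b).map_ne_zero_iff.mpr hx)
  exact ⟨b.coord i, by simpa [equivFinsuppOfBasisLeft_apply] using hi⟩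

lemma lid_rTensor_baseChange {R A M N : Type*} [CommRing R] [CommRing A] [Algebra R A]
    [AddCommGroup M] [Module R M] [AddCommGroup N] [Module R N] (φ : Module.Dual R A)
    (F : M →ₗ[R] N) (t : A ⊗[R] M) :
    TensorProduct.lid R N (φ.rTensor N (F.baseChange A t)) =
      F (TensorProduct.lid R M (φ.rTensor M t)) := by
  induction t using TensorProduct.induction_on with
  | zero => simp
  | tmul a m => simp
  | add x y hx hy => simp only [map_add, hx, hy]

lemma exists_intertwiningMap_ne_zero_of_repBaseChange {E₀ E G V V' : Type*} [CommRing E₀]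
    [CommRing E] [Algebra E₀ E] [Module.Free E₀ E] [Monoid G] [AddCommGroup V] [Module E₀ V]
    [AddCommGroup V'] [Module E₀ V'] {ρ : Representation E₀ G V}
    {ρ' : Representation E₀ G V'}
    (f : IntertwiningMap (repBaseChange E ρ) (repBaseChange E ρ')) (hf : f ≠ 0) :
    ∃ f₀ : IntertwiningMap ρ ρ', f₀ ≠ 0 := by
  obtain ⟨v, hv⟩ : ∃ v, f ((1 : E) ⊗ₜ[E₀] v) ≠ 0 := by
    by_contra! h
    refine hf (IntertwiningMap.ext (AlgebraTensorModule.ext fun a v => ?_))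
    rw [← mul_one a, ← smul_eq_mul, ← smul_tmul', LinearMap.map_smul]
    simp [IntertwiningMap.toLinearMap_apply, h]
  obtain ⟨φ, hφ⟩ := exists_lid_rTensor_ne_zero hv
  let f₀ : V →ₗ[E₀] V' := (TensorProduct.lid E₀ V').toLinearMap ∘ₗ φ.rTensor V' ∘ₗ
    f.toLinearMap.restrictScalars E₀ ∘ₗ TensorProduct.mk E₀ E V 1
  refine ⟨f₀.intertwiningMap_of_isIntertwiningMap ρ ρ' fun g w => ?_, fun h => hφ ?_⟩
  · have := IntertwiningMap.isIntertwining _ _ f g ((1 : E) ⊗ₜ[E₀] w)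
    simp only [repBaseChange_apply, LinearMap.baseChange_tmul] at this
    simp [f₀, this, lid_rTensor_baseChange]
  · exact DFunLike.congr_fun h v

theorem stmt_2_general {E₀ E G V V' : Type*} [Field E₀] [Field E] [Algebra E₀ E] [Group G]
    [AddCommGroup V] [Module E₀ V]
    [AddCommGroup V'] [Module E₀ V']
    (ρ : Representation E₀ G V) (ρ' : Representation E₀ G V')
    (hirr : IsIrredRep (repBaseChange E ρ))
    (hirr' : IsIrredRep (repBaseChange E ρ'))
    (hiso : ∃ f : (E ⊗[E₀] V) ≃ₗ[E] (E ⊗[E₀] V'),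
      ∀ (g : G) (x : E ⊗[E₀] V), f (repBaseChange E ρ g x) = repBaseChange E ρ' g (f x)) :
    ∃ f : V ≃ₗ[E₀] V', ∀ (g : G) (v : V), f (ρ g v) = ρ' g (f v) := by
  obtain ⟨f, hf⟩ := hiso
  have := hirr.of_repBaseChange.isIrreducible
  have := hirr'.of_repBaseChange.isIrreducible
  have hfE : f.toLinearMap.intertwiningMap_of_isIntertwiningMap _ _ hf ≠ 0 := by
    have := hirr.1
    obtain ⟨x, hx⟩ := exists_ne (0 : E ⊗[E₀] V)
    exact fun h => hx (f.map_eq_zero_iff.mp (DFunLike.congr_fun h x))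
  obtain ⟨f₀, hf₀⟩ := exists_intertwiningMap_ne_zero_of_repBaseChange _ hfE
  let e := f₀.ofBijective ((IsIrreducible.bijective_or_eq_zero f₀).resolve_right hf₀)
  exact ⟨e.toLinearEquiv, IntertwiningMap.isIntertwining _ _ f₀⟩

/-- if the base changes to `E ⊇ E₀` of two finite-dimensional
representations of `G` over `E₀` are irreducible and `G`-isomorphic over `E`, then the
representations are already isomorphic over `E₀`.  In particular an `E₀`-model of an
absolutely irreducible representation over `E` is unique up to isomorphism. -/
theorem stmt_2 {E₀ E G V V' : Type*} [Field E₀] [Field E] [Algebra E₀ E] [Group G]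
    [AddCommGroup V] [Module E₀ V] [FiniteDimensional E₀ V]
    [AddCommGroup V'] [Module E₀ V'] [FiniteDimensional E₀ V']
    (ρ : Representation E₀ G V) (ρ' : Representation E₀ G V')
    (hirr : IsIrredRep (repBaseChange E ρ))
    (hirr' : IsIrredRep (repBaseChange E ρ'))
    (hiso : ∃ f : (E ⊗[E₀] V) ≃ₗ[E] (E ⊗[E₀] V'),
      ∀ (g : G) (x : E ⊗[E₀] V), f (repBaseChange E ρ g x) = repBaseChange E ρ' g (f x)) :
    ∃ f : V ≃ₗ[E₀] V', ∀ (g : G) (v : V), f (ρ g v) = ρ' g (f v) :=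
  stmt_2_general ρ ρ' hirr hirr' hiso
end

section
/- Let E ⊆ E₀ be fields of characteristic 0 with E₀/E a finite extension, G a group, and V₀ a finite-dimensional irreducible representation of G over E₀. Then the restriction of scalars res_{E₀/E} V₀ is a semisimple representation of G over E, and it is isotypic: for every irreducible E-subrepresentation V of res_{E₀/E} V₀ there is an integer m ≥ 1 such that res_{E₀/E} V₀ is isomorphic to the direct sum V^{⊕m} of m copies of V as representations of G over E. -/
/-- Restriction of scalars of a representation along a field extension `E ⊆ E₀`. -/
noncomputable def resRep (E : Type*) {E₀ G V : Type*} [Field E] [Field E₀] [Algebra E E₀]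
    [Monoid G] [AddCommGroup V] [Module E₀ V] [Module E V] [IsScalarTower E E₀ V]
    (ρ : Representation E₀ G V) : Representation E G V where
  toFun g := (ρ g).restrictScalars E
  map_one' := by ext v; simp
  map_mul' g h := by ext v; simp

/-! Multiplication by any `c : E₀` commutes with the action of `G`, so it is an
`E[G]`-linear endomorphism of `res V₀`. Hence a fully invariant `E[G]`-submodule of `res V₀` is
an `E₀`-subrepresentation of `V₀`, so it is `0` or everything. The isotypic component of a simple
submodule is fully invariant and nonzero, hence all of `res V₀`, which is therefore semisimple and
isotypic of that type; finite dimensionality provides a simple submodule and makes the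
decomposition finite. -/

open scoped MonoidAlgebra

section FullyInvariant

variable {R M : Type*} [Ring R] [AddCommGroup M] [Module R M]

theorem isotypicComponent_eq_top_of_isFullyInvariant_eq_bot_or_top
    (h : ∀ N : Submodule R M, N.IsFullyInvariant → N = ⊥ ∨ N = ⊤) (S : Submodule R M)
    [IsSimpleModule R S] : isotypicComponent R M S = ⊤ :=
  (h _ (.isotypicComponent R M S)).resolve_left (bot_lt_isotypicComponent S).ne'

theorem IsIsotypic.of_isFullyInvariant_eq_bot_or_top
    (h : ∀ N : Submodule R M, N.IsFullyInvariant → N = ⊥ ∨ N = ⊤) : IsIsotypic R M :=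
  fun S _ =>
    .of_isotypicComponent_eq_top (isotypicComponent_eq_top_of_isFullyInvariant_eq_bot_or_top h S)

theorem IsSemisimpleModule.of_isFullyInvariant_eq_bot_or_top [IsAtomic (Submodule R M)]
    (h : ∀ N : Submodule R M, N.IsFullyInvariant → N = ⊥ ∨ N = ⊤) :
    IsSemisimpleModule R M := by
  obtain htop | ⟨S, hS, -⟩ := eq_bot_or_exists_atom_le (⊤ : Submodule R M)
  · have := subsingleton_iff_bot_eq_top.mp htop.symm
    exact (isSemisimpleModule_iff R M).mpr Subsingleton.instComplementedLattice
  · have := isSimpleModule_iff_isAtom.mpr hS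
    have : IsSemisimpleModule R (⊤ : Submodule R M) :=
      isotypicComponent_eq_top_of_isFullyInvariant_eq_bot_or_top h S ▸ inferInstance
    exact .congr Submodule.topEquiv.symm

end FullyInvariant

section

variable {k G V : Type*} [Field k] [Monoid G] [AddCommGroup V] [Module k V]
  {ρ : Representation k G V}

namespace Subrepresentation

theorem isCompl_toSubmodule {σ τ : Subrepresentation ρ} (h : IsCompl σ τ) :
    IsCompl σ.toSubmodule τ.toSubmodule :=
  ⟨disjoint_iff.mpr (congrArg toSubmodule h.inf_eq_bot),
    codisjoint_iff.mpr (congrArg toSubmodule h.sup_eq_top)⟩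

theorem isAtom_of_minimal {σ : Subrepresentation ρ} (hne : σ.toSubmodule ≠ ⊥)
    (hmin : ∀ U : Submodule k V, U ≤ σ.toSubmodule → (∀ g : G, ∀ v ∈ U, ρ g v ∈ U) →
      U = ⊥ ∨ U = σ.toSubmodule) : IsAtom σ := by
  refine ⟨fun h => hne (congrArg toSubmodule h), fun τ hτ => ?_⟩
  obtain h | h := hmin τ.toSubmodule hτ.le τ.apply_mem_toSubmodule
  · exact toSubmodule_injective h
  · exact absurd (toSubmodule_injective h) hτ.ne

theorem isSimpleModule_asSubmodule {σ : Subrepresentation ρ} (hσ : IsAtom σ) :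
    IsSimpleModule k[G] σ.asSubmodule :=
  isSimpleModule_iff_isAtom.mpr
    ((subrepresentationSubmoduleOrderIso (ρ := ρ)).isAtom_iff σ |>.mpr hσ)

end Subrepresentation

namespace Representation

theorem exists_isCompl_of_isSemisimpleModule [IsSemisimpleModule k[G] ρ.asModule]
    (W : Submodule k V) (hW : ∀ g : G, ∀ v ∈ W, ρ g v ∈ W) :
    ∃ W' : Submodule k V, (∀ g : G, ∀ v ∈ W', ρ g v ∈ W') ∧ IsCompl W W' := by
  have := (isSemisimpleRepresentation_iff_isSemisimpleModule_asModule ρ).mpr ‹_›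
  obtain ⟨τ, hτ⟩ := exists_isCompl (⟨W, hW⟩ : Subrepresentation ρ)
  exact ⟨τ.toSubmodule, τ.apply_mem_toSubmodule, Subrepresentation.isCompl_toSubmodule hτ⟩

theorem exists_equivariant_linearEquiv_pi {n : ℕ} {σ : Subrepresentation ρ}
    (F : ρ.asModule ≃ₗ[k[G]] (Fin n → σ.asSubmodule)) :
    ∃ f : V ≃ₗ[k] (Fin n → σ.toSubmodule),
      ∀ (g : G) (v : V) (i : Fin n), (f (ρ g v) i : V) = ρ g (f v i) := by
  let e : σ.asSubmodule ≃ₗ[k] σ.toSubmodule :=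
    { toFun x := ⟨x.1, x.2⟩
      invFun x := ⟨x.1, x.2⟩
      map_add' _ _ := rfl
      map_smul' _ _ := rfl
      left_inv _ := rfl
      right_inv _ := rfl }
  refine ⟨ρ.asModuleEquiv.symm ≪≫ₗ F.restrictScalars k ≪≫ₗ .piCongrRight fun _ => e,
    fun g v i => ?_⟩
  change ((F (ρ.asModuleEquiv.symm (ρ g v)) i : ρ.asModule) : V) =
    ρ g (F (ρ.asModuleEquiv.symm v) i : ρ.asModule)
  rw [asModuleEquiv_symm_map_rho, F.map_smul, Pi.smul_apply, Submodule.coe_smul,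
    MonoidAlgebra.of_apply, single_smul, one_smul]
  rfl

end Representation

end

section RestrictionOfScalars

open Representation

variable {E E₀ G V₀ : Type*} [Field E] [Field E₀] [Algebra E E₀] [Monoid G] [AddCommGroup V₀]
  [Module E₀ V₀] [Module E V₀] [IsScalarTower E E₀ V₀] (ρ₀ : Representation E₀ G V₀)

theorem resRep_apply (g : G) (v : V₀) : resRep E ρ₀ g v = ρ₀ g v := rfl

def smulIntertwiningMap (c : E₀) : IntertwiningMap (resRep E ρ₀) (resRep E ρ₀) where
  toLinearMap := (c • LinearMap.id : V₀ →ₗ[E₀] V₀).restrictScalars E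
  isIntertwining' g := by ext v; simp [resRep_apply]

theorem resRep_isFullyInvariant_eq_bot_or_top
    (hirr : ∀ W : Submodule E₀ V₀, (∀ g : G, ∀ v ∈ W, ρ₀ g v ∈ W) → W = ⊥ ∨ W = ⊤)
    (N : Submodule E[G] (resRep E ρ₀).asModule) (hN : N.IsFullyInvariant) : N = ⊥ ∨ N = ⊤ := by
  let T : Submodule E₀ V₀ :=
    { carrier := Subrepresentation.ofSubmodule' N
      add_mem' := N.add_mem
      zero_mem' := N.zero_mem
      smul_mem' c _ hv :=
        hN (IntertwiningMap.equivLinearMapAsModule _ _ (smulIntertwiningMap ρ₀ c)) hv }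
  refine (hirr T fun g v hv => (Subrepresentation.ofSubmodule' N).apply_mem_toSubmodule g hv).imp
    (fun h => eq_bot_iff.mpr fun (v : V₀) hv => ?_) (fun h => eq_top_iff.mpr fun (v : V₀) _ => ?_)
  · exact (h ▸ hv : v ∈ (⊥ : Submodule E₀ V₀))
  · exact (h ▸ Submodule.mem_top : v ∈ T)

end RestrictionOfScalars

theorem stmt_3_general {E E₀ G V₀ : Type*} [Field E] [Field E₀]
    [Algebra E E₀] [FiniteDimensional E E₀] [Group G]
    [AddCommGroup V₀] [Module E₀ V₀] [Module E V₀] [IsScalarTower E E₀ V₀]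
    [FiniteDimensional E₀ V₀]
    (ρ₀ : Representation E₀ G V₀)
    (hirr : ∀ W : Submodule E₀ V₀, (∀ g : G, ∀ v ∈ W, ρ₀ g v ∈ W) → W = ⊥ ∨ W = ⊤) :
    (∀ W : Submodule E V₀, (∀ g : G, ∀ v ∈ W, resRep E ρ₀ g v ∈ W) →
      ∃ W' : Submodule E V₀, (∀ g : G, ∀ v ∈ W', resRep E ρ₀ g v ∈ W') ∧ IsCompl W W') ∧
    (∀ W : Submodule E V₀, (∀ g : G, ∀ v ∈ W, resRep E ρ₀ g v ∈ W) →
      W ≠ ⊥ →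
      (∀ U : Submodule E V₀, U ≤ W → (∀ g : G, ∀ v ∈ U, resRep E ρ₀ g v ∈ U) →
        U = ⊥ ∨ U = W) →
      ∃ m : ℕ, 1 ≤ m ∧ ∃ f : V₀ ≃ₗ[E] (Fin m → W),
        ∀ (g : G) (v : V₀) (i : Fin m),
          (f (resRep E ρ₀ g v) i : V₀) = resRep E ρ₀ g ((f v i : V₀))) := by
  have : Module.Finite E V₀ := .trans E₀ V₀
  have : IsArtinian E[G] (resRep E ρ₀).asModule := isArtinian_of_tower E inferInstance
  have : Module.Finite E[G] (resRep E ρ₀).asModule := .of_restrictScalars_finite E _ _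
  have hfull := resRep_isFullyInvariant_eq_bot_or_top (E := E) ρ₀ hirr
  have := IsSemisimpleModule.of_isFullyInvariant_eq_bot_or_top hfull
  refine ⟨Representation.exists_isCompl_of_isSemisimpleModule, fun W hW hne hmin => ?_⟩
  let σ : Subrepresentation (resRep E ρ₀) := ⟨W, hW⟩
  have := Subrepresentation.isSimpleModule_asSubmodule
    (Subrepresentation.isAtom_of_minimal (σ := σ) hne hmin)
  obtain ⟨n, ⟨F⟩⟩ :=
    (IsIsotypic.of_isFullyInvariant_eq_bot_or_top hfull σ.asSubmodule).linearEquiv_fun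
  obtain ⟨f, hf⟩ := Representation.exists_equivariant_linearEquiv_pi F
  refine ⟨n, Nat.one_le_iff_ne_zero.mpr ?_, f, hf⟩
  rintro rfl
  have : Subsingleton V₀ := f.toEquiv.subsingleton
  exact hne Submodule.eq_bot_of_subsingleton

/-- for a finite extension `E₀/E` of fields of characteristic 0 and a
finite-dimensional irreducible representation `V₀` of `G` over `E₀`, the restriction of
scalars `res_{E₀/E} V₀` is semisimple over `E` (every invariant subspace has an
invariant complement) and isotypic: every irreducible invariant `E`-subspace `W`
satisfies `res_{E₀/E} V₀ ≅ W^{⊕m}` for some `m ≥ 1`, equivariantly. -/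
theorem stmt_3 {E E₀ G V₀ : Type*} [Field E] [CharZero E] [Field E₀] [CharZero E₀]
    [Algebra E E₀] [FiniteDimensional E E₀] [Group G]
    [AddCommGroup V₀] [Module E₀ V₀] [Module E V₀] [IsScalarTower E E₀ V₀]
    [FiniteDimensional E₀ V₀]
    (ρ₀ : Representation E₀ G V₀)
    (hnontriv : Nontrivial V₀)
    (hirr : ∀ W : Submodule E₀ V₀, (∀ g : G, ∀ v ∈ W, ρ₀ g v ∈ W) → W = ⊥ ∨ W = ⊤) :
    (∀ W : Submodule E V₀, (∀ g : G, ∀ v ∈ W, resRep E ρ₀ g v ∈ W) →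
      ∃ W' : Submodule E V₀, (∀ g : G, ∀ v ∈ W', resRep E ρ₀ g v ∈ W') ∧ IsCompl W W') ∧
    (∀ W : Submodule E V₀, (∀ g : G, ∀ v ∈ W, resRep E ρ₀ g v ∈ W) →
      W ≠ ⊥ →
      (∀ U : Submodule E V₀, U ≤ W → (∀ g : G, ∀ v ∈ U, resRep E ρ₀ g v ∈ U) →
        U = ⊥ ∨ U = W) →
      ∃ m : ℕ, 1 ≤ m ∧ ∃ f : V₀ ≃ₗ[E] (Fin m → W),
        ∀ (g : G) (v : V₀) (i : Fin m),
          (f (resRep E ρ₀ g v) i : V₀) = resRep E ρ₀ g ((f v i : V₀))) :=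
  stmt_3_general ρ₀ hirr
end

section
/- Let E ⊆ E₀ ⊆ ℂ be fields with E₀/E finite, G a group, and V₀ a finite-dimensional absolutely irreducible representation of G over E₀. Assume that for any two distinct E-algebra embeddings σ, τ: E₀ → ℂ the σ-conjugate ℂ ⊗_{σ,E₀} V₀ and the τ-conjugate ℂ ⊗_{τ,E₀} V₀ are non-isomorphic as representations of G over ℂ. Then the restriction of scalars res_{E₀/E} V₀ is an irreducible representation of G over E. -/
open scoped TensorProduct

/-- `ρW` (a complex representation of `G` on `W`) realizes the conjugate
`ℂ ⊗_{σ,k} V` of a representation `ρ` of `G` on a finite-dimensional `k`-vector space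
`V` along a field embedding `σ : k → ℂ`: there is a `σ`-semilinear `G`-equivariant map
`V → W` whose image spans `W` over `ℂ`, with `dim_ℂ W = dim_k V`. -/
def IsConjugateRep {k G V W : Type*} [Field k] [Monoid G]
    [AddCommGroup V] [Module k V] [AddCommGroup W] [Module ℂ W]
    (σ : k →+* ℂ) (ρ : Representation k G V) (ρW : Representation ℂ G W) : Prop :=
  ∃ j : V →ₛₗ[σ] W,
    (∀ (g : G) (v : V), j (ρ g v) = ρW g (j v)) ∧
    Submodule.span ℂ (Set.range j) = ⊤ ∧
    Module.finrank ℂ W = Module.finrank k V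

/-! If `W ⊆ V₀` is a nonzero `G`-stable `E`-subspace, then for every `E`-embedding
`σ : E₀ → ℂ` the induced map `ℂ ⊗_E W → ℂ ⊗_{σ,E₀} V₀` is a nonzero intertwiner into a
representation that is irreducible by absolute irreducibility, hence it is surjective. The
`[E₀ : E]` targets are pairwise non-isomorphic, so by Schur's lemma the combined map
`ℂ ⊗_E W → ∏_σ ℂ ⊗_{σ,E₀} V₀` is surjective as well, and
`dim_E W ≥ [E₀ : E] · dim_{E₀} V₀ = dim_E V₀`. -/

open Function Representation

section Irreducible

variable {k G V W : Type*} [CommRing k] [Monoid G] [AddCommGroup V] [Module k V]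
  [AddCommGroup W] [Module k W] {ρ : Representation k G V} {ρ' : Representation k G W}
  {f : V →ₗ[k] W}

theorem IsIrredRep.injective_of_ne_zero (hρ : IsIrredRep ρ) (hf : IsIntertwiningMap ρ ρ' f)
    (h0 : f ≠ 0) : Injective f := by
  have hker : ∀ g, ∀ v ∈ LinearMap.ker f, ρ g v ∈ LinearMap.ker f := fun g v hv => by
    rw [LinearMap.mem_ker] at hv ⊢
    rw [hf.isIntertwining, hv, map_zero]
  refine LinearMap.ker_eq_bot.1 ((hρ.2 _ hker).resolve_right fun htop => h0 ?_)
  exact LinearMap.ker_eq_top.1 htop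

theorem IsIrredRep.surjective_of_ne_zero (hρ' : IsIrredRep ρ') (hf : IsIntertwiningMap ρ ρ' f)
    (h0 : f ≠ 0) : Surjective f := by
  have hrange : ∀ g, ∀ w ∈ LinearMap.range f, ρ' g w ∈ LinearMap.range f := by
    rintro g _ ⟨v, rfl⟩
    exact ⟨ρ g v, hf.isIntertwining g v⟩
  refine LinearMap.range_eq_top.1 ((hρ'.2 _ hrange).resolve_left fun hbot => h0 ?_)
  exact LinearMap.range_eq_bot.1 hbot

theorem IsIrredRep.eq_zero_of_not_exists_equiv (hρ : IsIrredRep ρ) (hρ' : IsIrredRep ρ')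
    (hne : ¬∃ e : V ≃ₗ[k] W, ∀ g v, e (ρ g v) = ρ' g (e v)) (hf : IsIntertwiningMap ρ ρ' f) :
    f = 0 := by
  by_contra h0
  exact hne ⟨.ofBijective f ⟨hρ.injective_of_ne_zero hf h0, hρ'.surjective_of_ne_zero hf h0⟩,
    hf.isIntertwining⟩

end Irreducible

theorem IsIrredRep.of_bijective {C D G X Y : Type*} [CommRing C] [CommRing D] [Monoid G]
    [AddCommGroup X] [Module C X] [AddCommGroup Y] [Module D Y] {ε : C →+* D}
    {ρ : Representation C G X} {ρ' : Representation D G Y} (φ : X →ₛₗ[ε] Y)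
    (hφ : Bijective φ) (hint : ∀ g x, φ (ρ g x) = ρ' g (φ x)) (hρ : IsIrredRep ρ) :
    IsIrredRep ρ' := by
  have := hρ.1
  refine ⟨hφ.1.nontrivial, fun Z hZ => ?_⟩
  have hcomap : ∀ g, ∀ x ∈ Z.comap φ, ρ g x ∈ Z.comap φ := fun g x hx => by
    simpa only [Submodule.mem_comap, hint] using hZ g _ hx
  refine (hρ.2 _ hcomap).imp (fun h => (Submodule.eq_bot_iff Z).2 fun y hy => ?_)
    (fun h => eq_top_iff.2 fun y _ => ?_) <;> obtain ⟨x, rfl⟩ := hφ.2 y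
  · rw [(Submodule.eq_bot_iff _).1 h x hy, map_zero]
  · exact (h ▸ Submodule.mem_top : x ∈ Z.comap φ)

section Disjoint

variable {F G T Y Z : Type*} [Field F] [Monoid G] [AddCommGroup T] [Module F T]
  [AddCommGroup Y] [Module F Y] [AddCommGroup Z] [Module F Z] {ρT : Representation F G T}
  {ρY : Representation F G Y} {ρZ : Representation F G Z}

theorem Representation.IsIntertwiningMap.map_le_comap {p : T →ₗ[F] Y}
    (hpi : IsIntertwiningMap ρT ρY p)
    {S : Submodule F T} (hS : ∀ g, S ≤ S.comap (ρT g)) (g : G) :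
    S.map p ≤ (S.map p).comap (ρY g) := by
  rintro _ ⟨t, ht, rfl⟩
  exact ⟨ρT g t, hS g ht, hpi.isIntertwining g t⟩

theorem exists_isIntertwiningMap_of_inf_ker_le {S : Submodule F T}
    (hS : ∀ g, S ≤ S.comap (ρT g)) {p : T →ₗ[F] Y} {q : T →ₗ[F] Z} (hp : S.map p = ⊤)
    (hker : S ⊓ LinearMap.ker p ≤ LinearMap.ker q) (hpi : IsIntertwiningMap ρT ρY p)
    (hqi : IsIntertwiningMap ρT ρZ q) :
    ∃ f : Y →ₗ[F] Z, IsIntertwiningMap ρY ρZ f ∧ ∀ t ∈ S, f (p t) = q t := by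
  have hpS : LinearMap.range (p ∘ₗ S.subtype) = ⊤ := by
    rw [LinearMap.range_comp, Submodule.range_subtype, hp]
  obtain ⟨s, hs⟩ := (p ∘ₗ S.subtype).exists_rightInverse_of_surjective hpS
  have hsq : ∀ t ∈ S, q (s (p t)) = q t := fun t ht => by
    rw [← sub_eq_zero, ← map_sub]
    refine hker ⟨S.sub_mem (s (p t)).2 ht, ?_⟩
    rw [SetLike.mem_coe, LinearMap.mem_ker, map_sub, sub_eq_zero]
    exact LinearMap.congr_fun hs (p t)
  refine ⟨q ∘ₗ S.subtype ∘ₗ s, ⟨fun g y => ?_⟩, hsq⟩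
  obtain ⟨t, ht, rfl⟩ := hp.ge (Submodule.mem_top (x := y))
  simp only [LinearMap.comp_apply, Submodule.subtype_apply, ← hpi.isIntertwining,
    hsq _ (hS g ht), hsq t ht, hqi.isIntertwining]

variable {ι : Type*} {X : ι → Type*} [∀ i, AddCommGroup (X i)] [∀ i, Module F (X i)]
  {ρX : ∀ i, Representation F G (X i)} {q : ∀ i, T →ₗ[F] X i}

theorem iInf_ker_le_comap (hqi : ∀ i, IsIntertwiningMap ρT (ρX i) (q i)) (s : Finset ι)
    (g : G) : ⨅ i ∈ s, LinearMap.ker (q i) ≤ (⨅ i ∈ s, LinearMap.ker (q i)).comap (ρT g) := by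
  intro t ht
  simp only [Submodule.mem_comap, Submodule.mem_iInf, LinearMap.mem_ker] at ht ⊢
  exact fun i hi => by rw [(hqi i).isIntertwining, ht i hi, map_zero]

theorem map_iInf_ker_eq_top (hirr : ∀ i, IsIrredRep (ρX i))
    (hdisj : ∀ i j, i ≠ j → ∀ f : X i →ₗ[F] X j, IsIntertwiningMap (ρX i) (ρX j) f → f = 0)
    (hq : ∀ i, Surjective (q i)) (hqi : ∀ i, IsIntertwiningMap ρT (ρX i) (q i))
    (s : Finset ι) {a : ι} (ha : a ∉ s) :
    (⨅ i ∈ s, LinearMap.ker (q i)).map (q a) = ⊤ := by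
  classical
  induction s using Finset.induction_on generalizing a with
  | empty => simpa using LinearMap.range_eq_top.2 (hq a)
  | insert b s hb ih =>
    rw [Finset.mem_insert, not_or] at ha
    have hinv := (hqi a).map_le_comap (iInf_ker_le_comap hqi (insert b s))
    rw [Finset.iInf_insert, inf_comm] at hinv ⊢
    refine ((hirr a).2 _ hinv).resolve_left fun hbot => ?_
    -- otherwise `q a` factors through `q b` on `⨅ i ∈ s, ker (q i)` via a nonzero intertwiner
    obtain ⟨f, hf, hfq⟩ := exists_isIntertwiningMap_of_inf_ker_le (iInf_ker_le_comap hqi s)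
      (ih hb) (fun t ht => by simpa [hbot] using Submodule.mem_map_of_mem (f := q a) ht)
      (hqi b) (hqi a)
    have := (hirr a).1
    obtain ⟨x, hx⟩ := exists_ne (0 : X a)
    obtain ⟨t, ht, rfl⟩ := (ih ha.2).ge (Submodule.mem_top (x := x))
    rw [← hfq t ht, hdisj b a (Ne.symm ha.1) f hf, LinearMap.zero_apply] at hx
    exact hx rfl

theorem LinearMap.pi_surjective_of_isIrredRep [Fintype ι] (hirr : ∀ i, IsIrredRep (ρX i))
    (hdisj : ∀ i j, i ≠ j → ∀ f : X i →ₗ[F] X j, IsIntertwiningMap (ρX i) (ρX j) f → f = 0)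
    (hq : ∀ i, Surjective (q i)) (hqi : ∀ i, IsIntertwiningMap ρT (ρX i) (q i)) :
    Surjective (LinearMap.pi q) := by
  classical
  have hlift : ∀ a (x : X a), ∃ t, q a t = x ∧ ∀ i ≠ a, q i t = 0 := by
    intro a x
    obtain ⟨t, ht, rfl⟩ := (map_iInf_ker_eq_top hirr hdisj hq hqi _
      (Finset.notMem_erase a Finset.univ)).ge (Submodule.mem_top (x := x))
    simp only [SetLike.mem_coe, Submodule.mem_iInf, LinearMap.mem_ker, Finset.mem_erase,
      Finset.mem_univ, and_true] at ht
    exact ⟨t, rfl, ht⟩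
  choose t htq ht0 using hlift
  intro x
  refine ⟨∑ a, t a (x a), funext fun i => ?_⟩
  rw [LinearMap.pi_apply, map_sum, Finset.sum_eq_single i (fun a _ hai => ht0 a (x a) i hai.symm)
    (by simp), htq]

end Disjoint

theorem repBaseChange_tmul {E G V : Type*} [CommSemiring E] [Monoid G] [AddCommMonoid V]
    [Module E V] {F : Type*} [CommSemiring F] [Algebra E F] (ρ : Representation E G V) (g : G)
    (c : F) (v : V) : repBaseChange F ρ g (c ⊗ₜ[E] v) = c ⊗ₜ[E] ρ g v :=
  rfl

section BaseChange

variable {E A G M X : Type*} [CommRing E] [CommRing A] [Algebra E A] [Monoid G]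
  [AddCommGroup M] [Module E M] [AddCommGroup X] [Module A X] [Module E X] [IsScalarTower E A X]
  {ρ : Representation E G M} {ρX : Representation A G X} {f : M →ₗ[E] X}

theorem isIntertwiningMap_liftBaseChange (hf : ∀ g m, f (ρ g m) = ρX g (f m)) :
    IsIntertwiningMap (repBaseChange A ρ) ρX (f.liftBaseChange A) := by
  refine ⟨fun g t => ?_⟩
  induction t using TensorProduct.induction_on with
  | zero => simp
  | tmul c m => simp [repBaseChange_tmul, hf]
  | add s t hs ht => simp only [map_add, hs, ht]

theorem surjective_liftBaseChange (hρX : IsIrredRep ρX) (hf : ∀ g m, f (ρ g m) = ρX g (f m))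
    (h0 : f ≠ 0) : Surjective (f.liftBaseChange A) :=
  hρX.surjective_of_ne_zero (isIntertwiningMap_liftBaseChange hf) fun h =>
    h0 (LinearMap.ext fun m => by simpa using LinearMap.congr_fun h (1 ⊗ₜ m))

end BaseChange

theorem Submodule.eq_top_of_surjective_of_finrank_le {E L V Y : Type*} [Field E] [Field L]
    [Algebra E L] [AddCommGroup V] [Module E V] [FiniteDimensional E V] [AddCommGroup Y]
    [Module L Y] {W : Submodule E V} {Q : L ⊗[E] W →ₗ[L] Y} (hQ : Surjective Q)
    (hle : Module.finrank E V ≤ Module.finrank L Y) : W = ⊤ :=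
  Submodule.eq_top_of_finrank_eq <| (Submodule.finrank_le W).antisymm <| hle.trans <|
    (LinearMap.finrank_le_finrank_of_surjective hQ).trans_eq Module.finrank_baseChange

def RingHom.compLeftₛₗ {R S : Type*} [Semiring R] [Semiring S] (σ : R →+* S) (ι : Type*) :
    (ι → R) →ₛₗ[σ] (ι → S) where
  toFun x := σ ∘ x
  map_add' x y := by ext; simp
  map_smul' c x := by ext; simp

section Conjugate

variable {k G V ι K : Type*} [Field k] [Monoid G] [AddCommGroup V] [Module k V] [Fintype ι]
  [CommRing K] (b : Module.Basis ι k V) (σ : k →+* K) (ρ : Representation k G V)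

noncomputable def conjugateMap : V →ₛₗ[σ] (ι → K) :=
  (σ.compLeftₛₗ ι).comp b.equivFun.toLinearMap

theorem conjugateMap_apply (v : V) (i : ι) : conjugateMap b σ v i = σ (b.repr v i) :=
  rfl

theorem conjugateMap_injective (hσ : Injective σ) : Injective (conjugateMap b σ) :=
  hσ.comp_left.comp b.equivFun.injective

variable [DecidableEq ι]

/-- The conjugate `K ⊗_{σ,k} V` in the basis `b ⊗ 1`: apply `σ` to the matrix entries of `ρ`. -/
noncomputable def conjugateRep : Representation K G (ι → K) :=
  Matrix.toLinAlgEquiv'.toMonoidHom.comp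
    (σ.mapMatrix.toMonoidHom.comp ((LinearMap.toMatrixAlgEquiv b).toMonoidHom.comp ρ))

theorem conjugateMap_intertwines (g : G) (v : V) :
    conjugateMap b σ (ρ g v) = conjugateRep b σ ρ g (conjugateMap b σ v) := by
  ext i
  rw [conjugateMap_apply, ← LinearMap.toMatrix_mulVec_repr b b, RingHom.map_mulVec]
  rfl

theorem conjugateMap_basis (i : ι) : conjugateMap b σ (b i) = Pi.single i 1 := by
  ext j
  simp [conjugateMap_apply, Finsupp.single_apply, Pi.single_apply, eq_comm]

theorem span_range_conjugateMap : Submodule.span K (Set.range (conjugateMap b σ)) = ⊤ := by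
  refine eq_top_iff.2 ((Pi.basisFun K ι).span_eq.ge.trans (Submodule.span_mono ?_))
  rintro _ ⟨i, rfl⟩
  exact ⟨b i, by simp [conjugateMap_basis]⟩

theorem isIrredRep_conjugateRep {F : Type*} [CommRing F] [Algebra k F] (ε : F ≃+* K)
    (hε : (ε : F →+* K).comp (algebraMap k F) = σ) (h : IsIrredRep (repBaseChange F ρ)) :
    IsIrredRep (conjugateRep b σ ρ) := by
  let φ : F ⊗[k] V →ₛₗ[(ε : F →+* K)] (ι → K) :=
    ((ε : F →+* K).compLeftₛₗ ι).comp (b.baseChange F).equivFun.toLinearMap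
  have hφ : ∀ c v, φ (c ⊗ₜ v) = ε c • conjugateMap b σ v := fun c v => by
    ext i
    simp [φ, RingHom.compLeftₛₗ, conjugateMap_apply, ← hε, Algebra.smul_def, mul_comm]
  refine h.of_bijective φ (ε.bijective.comp_left.comp (b.baseChange F).equivFun.bijective)
    fun g x => ?_
  induction x using TensorProduct.induction_on with
  | zero => simp
  | tmul c v => rw [repBaseChange_tmul, hφ, hφ, map_smul, conjugateMap_intertwines]
  | add x y hx hy => simp only [map_add, hx, hy]

theorem isConjugateRep_conjugateRep (σ : k →+* ℂ) : IsConjugateRep σ ρ (conjugateRep b σ ρ) :=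
  ⟨conjugateMap b σ, conjugateMap_intertwines b σ ρ, span_range_conjugateMap b σ,
    by rw [Module.finrank_fintype_fun_eq_card, Module.finrank_eq_card_basis b]⟩

theorem exists_surjective_isIntertwiningMap_conjugateRep {E : Type*} [Field E] [Nontrivial K]
    [Algebra E k] [Algebra E K] [Module E V] [IsScalarTower E k V] (σ : k →ₐ[E] K)
    (hirr : IsIrredRep (conjugateRep b σ.toRingHom ρ)) {W : Submodule E V}
    (hW : ∀ g, W ≤ W.comap (resRep E ρ g)) (hW0 : W ≠ ⊥) :
    ∃ q : K ⊗[E] W →ₗ[K] (ι → K), Surjective q ∧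
      IsIntertwiningMap (repBaseChange K ((resRep E ρ).subrepresentation W hW))
        (conjugateRep b σ.toRingHom ρ) q := by
  -- `f` is `conjugateMap b σ` on `W`, definitionally
  let f : W →ₗ[E] (ι → K) :=
    σ.toLinearMap.compLeft ι ∘ₗ b.equivFun.toLinearMap.restrictScalars E ∘ₗ W.subtype
  have hf (g : G) (w : W) :
      f ((resRep E ρ).subrepresentation W hW g w) = conjugateRep b σ.toRingHom ρ g (f w) :=
    conjugateMap_intertwines b σ.toRingHom ρ g w
  have hf0 : f ≠ 0 := fun h => by
    obtain ⟨w, hw, hw0⟩ := W.ne_bot_iff.1 hW0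
    exact hw0 (conjugateMap_injective b σ.toRingHom σ.injective
      ((LinearMap.congr_fun h ⟨w, hw⟩).trans (map_zero _).symm))
  exact ⟨_, surjective_liftBaseChange hirr hf hf0, isIntertwiningMap_liftBaseChange hf⟩

end Conjugate

theorem stmt_4_general {E E₀ G V₀ : Type*} [Field E] [Field E₀] [Algebra E E₀]
    [Algebra E ℂ] [FiniteDimensional E E₀]
    [Group G]
    [AddCommGroup V₀] [Module E₀ V₀] [Module E V₀] [IsScalarTower E E₀ V₀]
    [FiniteDimensional E₀ V₀]
    (ρ₀ : Representation E₀ G V₀)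
    (habs : ∀ (F : Type*) [Field F] [Algebra E₀ F], IsIrredRep (repBaseChange F ρ₀))
    (hconj : ∀ σ τ : E₀ →ₐ[E] ℂ, σ ≠ τ →
      ∀ (W W' : Type) [AddCommGroup W] [Module ℂ W] [AddCommGroup W'] [Module ℂ W']
        (ρW : Representation ℂ G W) (ρW' : Representation ℂ G W'),
        IsConjugateRep σ.toRingHom ρ₀ ρW → IsConjugateRep τ.toRingHom ρ₀ ρW' →
        ¬∃ f : W ≃ₗ[ℂ] W', ∀ (g : G) (w : W), f (ρW g w) = ρW' g (f w)) :
    IsIrredRep (resRep E ρ₀) := by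
  have : CharZero E := RingHom.charZero (algebraMap E ℂ)
  let b := Module.finBasis E₀ V₀
  let ρX (σ : E₀ →ₐ[E] ℂ) := conjugateRep b σ.toRingHom ρ₀
  have hirr (σ : E₀ →ₐ[E] ℂ) : IsIrredRep (ρX σ) := by
    -- `habs` quantifies over fields in an arbitrary universe, hence `ULift ℂ`
    let _ : Algebra E₀ (ULift ℂ) := (ULift.ringEquiv.symm.toRingHom.comp σ.toRingHom).toAlgebra
    exact isIrredRep_conjugateRep b _ ρ₀ ULift.ringEquiv rfl (habs _)
  have hdisj (σ τ : E₀ →ₐ[E] ℂ) (hστ : σ ≠ τ) (f) (hf : IsIntertwiningMap (ρX σ) (ρX τ) f) :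
      f = 0 :=
    (hirr σ).eq_zero_of_not_exists_equiv (hirr τ) (hconj σ τ hστ _ _ _ _
      (isConjugateRep_conjugateRep b ρ₀ _) (isConjugateRep_conjugateRep b ρ₀ _)) hf
  have hcard : Fintype.card (E₀ →ₐ[E] ℂ) = Module.finrank E E₀ := AlgHom.card E E₀ ℂ
  obtain ⟨σ₀⟩ : Nonempty (E₀ →ₐ[E] ℂ) := Fintype.card_pos_iff.1 (hcard ▸ Module.finrank_pos)
  have := (hirr σ₀).1
  refine ⟨Module.nontrivial_of_finrank_pos (R := E₀) ?_, fun W hW => ?_⟩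
  · simpa using Module.finrank_pos (R := ℂ) (M := Fin (Module.finrank E₀ V₀) → ℂ)
  refine (eq_or_ne W ⊥).imp_right fun hW0 => ?_
  choose q hq hqi using fun σ =>
    exists_surjective_isIntertwiningMap_conjugateRep b ρ₀ σ (hirr σ) hW hW0
  have : FiniteDimensional E V₀ := Module.Finite.trans E₀ V₀
  refine Submodule.eq_top_of_surjective_of_finrank_le
    (LinearMap.pi_surjective_of_isIrredRep hirr hdisj hq hqi) ?_
  rw [← Module.finrank_mul_finrank E E₀ V₀, Module.finrank_pi_fintype]
  simp [hcard]

/-- let `E ⊆ E₀ ⊆ ℂ` with `E₀/E` finite and `V₀` a finite-dimensional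
absolutely irreducible representation of `G` over `E₀`.  If for any two distinct
`E`-algebra embeddings `σ, τ : E₀ → ℂ` the conjugates `ℂ ⊗_{σ,E₀} V₀` and
`ℂ ⊗_{τ,E₀} V₀` are non-isomorphic as representations of `G` over `ℂ`, then the
restriction of scalars `res_{E₀/E} V₀` is irreducible over `E`. -/
theorem stmt_4 {E E₀ G V₀ : Type*} [Field E] [Field E₀] [Algebra E E₀]
    [Algebra E ℂ] [Algebra E₀ ℂ] [IsScalarTower E E₀ ℂ] [FiniteDimensional E E₀]
    [Group G]
    [AddCommGroup V₀] [Module E₀ V₀] [Module E V₀] [IsScalarTower E E₀ V₀]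
    [FiniteDimensional E₀ V₀]
    (ρ₀ : Representation E₀ G V₀)
    (habs : ∀ (F : Type*) [Field F] [Algebra E₀ F], IsIrredRep (repBaseChange F ρ₀))
    (hconj : ∀ σ τ : E₀ →ₐ[E] ℂ, σ ≠ τ →
      ∀ (W W' : Type) [AddCommGroup W] [Module ℂ W] [AddCommGroup W'] [Module ℂ W']
        (ρW : Representation ℂ G W) (ρW' : Representation ℂ G W'),
        IsConjugateRep σ.toRingHom ρ₀ ρW → IsConjugateRep τ.toRingHom ρ₀ ρW' →
        ¬∃ f : W ≃ₗ[ℂ] W', ∀ (g : G) (w : W), f (ρW g w) = ρW' g (f w)) :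
    IsIrredRep (resRep E ρ₀) :=
  stmt_4_general ρ₀ habs hconj
end

section
/- Let E be a field of characteristic 0, G a group, and V a nonzero representation of G over E satisfying the Schur condition over E. Let χ: G → Eˣ be a group homomorphism with χ(g)² = 1 for all g ∈ G and with χ(g₀) = −1 for some g₀ ∈ G, and let ψ: V → V be a bijective χ-twisted equivariant E-linear map. Then there is a unique α ∈ Eˣ with ψ ∘ ψ = α · id_V, the map ψ is not a scalar multiple of the identity, and consequently the minimal polynomial of ψ over E is X² − α. -/
open Polynomial

/-- let `V` be a nonzero representation of `G` over a field `E` of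
characteristic 0 satisfying the Schur condition, `χ : G → Eˣ` a character with
`χ(g)² = 1` for all `g` and `χ(g₀) = -1` for some `g₀`, and `ψ` a bijective `χ`-twisted
equivariant `E`-linear endomorphism of `V`.  Then there is a unique `α ∈ Eˣ` with
`ψ ∘ ψ = α·id`, `ψ` is not a scalar, and the minimal polynomial of `ψ` is `X² - α`. -/
theorem stmt_6 {E G V : Type*} [Field E] [CharZero E] [Group G]
    [AddCommGroup V] [Module E V] [Nontrivial V]
    (ρ : Representation E G V)
    (hSchur : ∀ f : Module.End E V, (∀ (g : G) (v : V), f (ρ g v) = ρ g (f v)) →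
      ∃ c : E, f = c • (1 : Module.End E V))
    (χ : G →* Eˣ) (hχ : ∀ g : G, χ g * χ g = 1) (g₀ : G) (hg₀ : χ g₀ = -1)
    (ψ : Module.End E V) (hbij : Function.Bijective ψ)
    (htw : ∀ (g : G) (v : V), ψ (ρ g v) = (χ g : E) • ρ g (ψ v)) :
    ∃ α : Eˣ, ψ * ψ = (α : E) • (1 : Module.End E V) ∧
      (∀ α' : Eˣ, ψ * ψ = (α' : E) • (1 : Module.End E V) → α' = α) ∧
      (¬∃ c : E, ψ = c • (1 : Module.End E V)) ∧
      minpoly E ψ = X ^ 2 - C (α : E) := by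
  obtain ⟨v₀, hv₀⟩ := exists_ne (0 : V)
  -- ψ² is equivariant
  have hcomm : ∀ (g : G) (v : V), (ψ * ψ) (ρ g v) = ρ g ((ψ * ψ) v) := by
    intro g v
    have h3 : ((χ g : E) * (χ g : E)) = 1 := by
      rw [← Units.val_mul, hχ g, Units.val_one]
    calc (ψ * ψ) (ρ g v) = ψ ((χ g : E) • ρ g (ψ v)) := by
          simp [Module.End.mul_apply, htw]
      _ = (χ g : E) • ((χ g : E) • ρ g (ψ (ψ v))) := by rw [map_smul, htw]
      _ = ρ g ((ψ * ψ) v) := by rw [smul_smul, h3, one_smul]; rfl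
  obtain ⟨c, hc⟩ := hSchur (ψ * ψ) hcomm
  have hc0 : c ≠ 0 := by
    intro h
    apply hv₀
    have h1 : ψ (ψ v₀) = 0 := by
      have := congrFun (congrArg DFunLike.coe hc) v₀
      simpa [h, Module.End.mul_apply] using this
    have h2 : ψ v₀ = 0 := hbij.injective (by simpa using h1)
    exact hbij.injective (by simpa using h2)
  -- scalars are determined
  have hscalar_inj : ∀ c₁ c₂ : E, (c₁ • (1 : Module.End E V)) = c₂ • 1 → c₁ = c₂ := by
    intro c₁ c₂ h
    have := congrFun (congrArg DFunLike.coe h) v₀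
    simp only [LinearMap.smul_apply, Module.End.one_apply] at this
    by_contra hne
    exact hv₀ (by
      have := sub_eq_zero.mpr this
      rw [← sub_smul] at this
      exact (smul_eq_zero.mp this).resolve_left (sub_ne_zero.mpr hne))
  -- ψ is not a scalar
  have hnotscalar : ¬∃ d : E, ψ = d • (1 : Module.End E V) := by
    rintro ⟨d, hd⟩
    have hd0 : d ≠ 0 := by
      intro h
      rw [h, zero_smul] at hd
      apply hv₀
      exact hbij.injective (by simp [hd])
    have hone : ρ g₀ * ρ g₀⁻¹ = 1 := by rw [← map_mul, mul_inv_cancel, map_one]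
    have hsurj : Function.Surjective (ρ g₀) := fun w =>
      ⟨ρ g₀⁻¹ w, by
        have := congrFun (congrArg DFunLike.coe hone) w
        simpa [Module.End.mul_apply] using this⟩
    obtain ⟨u, hu⟩ := hsurj v₀
    have key : d • v₀ = -(d • v₀) := by
      have h := htw g₀ u
      rw [hd] at h
      simp only [LinearMap.smul_apply, Module.End.one_apply, map_smul, hu, hg₀] at h
      rwa [Units.val_neg, Units.val_one, neg_smul, one_smul] at h
    have h2 : (2 * d) • v₀ = 0 := by
      rw [mul_smul, two_smul]
      nth_rewrite 2 [key]
      rw [add_neg_cancel]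
    rcases smul_eq_zero.mp h2 with h | h
    · exact hd0 (by simpa using h)
    · exact hv₀ h
  -- minpoly
  refine ⟨Units.mk0 c hc0, hc, fun α' hα' => Units.ext (hscalar_inj _ _ (hα' ▸ hc)), hnotscalar, ?_⟩
  have haev : (aeval ψ) (X ^ 2 - C c) = 0 := by
    simp [sq, hc, Algebra.algebraMap_eq_smul_one]
  have hmonic : (X ^ 2 - C c : E[X]).Monic := monic_X_pow_sub_C c two_ne_zero
  have hdvd : minpoly E ψ ∣ (X ^ 2 - C c) := minpoly.dvd E ψ haev
  have hint : IsIntegral E ψ := ⟨X ^ 2 - C c, hmonic, haev⟩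
  have hmm : (minpoly E ψ).Monic := minpoly.monic hint
  have hdeg2 : (X ^ 2 - C c : E[X]).natDegree = 2 := by
    rw [natDegree_sub_C, natDegree_X_pow]
  have hle : (minpoly E ψ).natDegree ≤ 2 := by
    rw [← hdeg2]
    exact natDegree_le_of_dvd hdvd hmonic.ne_zero
  have hne1 : (minpoly E ψ).natDegree ≠ 1 := by
    intro h1
    apply hnotscalar
    have heq : minpoly E ψ = X + C ((minpoly E ψ).coeff 0) := by
      have := eq_X_add_C_of_natDegree_le_one (p := minpoly E ψ) (by omega)
      rwa [show (minpoly E ψ).coeff 1 = 1 from by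
        have := hmm.leadingCoeff; rwa [leadingCoeff, h1] at this, C_1, one_mul] at this
    have h0 := minpoly.aeval E ψ
    rw [heq] at h0
    simp only [map_add, aeval_X, aeval_C, Algebra.algebraMap_eq_smul_one] at h0
    exact ⟨-(minpoly E ψ).coeff 0, by
      rw [neg_smul]
      exact eq_neg_of_add_eq_zero_left h0⟩
  have hge : 0 < (minpoly E ψ).natDegree := minpoly.natDegree_pos hint
  have hdegeq : (minpoly E ψ).natDegree = 2 := by omega
  show minpoly E ψ = X ^ 2 - C c
  exact eq_of_monic_of_associated hmm hmonic
    (associated_of_dvd_of_natDegree_le hdvd hmonic.ne_zero (by omega))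
end

section
/- Let E be a field of characteristic 0, G a group, and V a nonzero representation of G over E satisfying the Schur condition over E. Let χ: G → Eˣ be a group homomorphism with χ(g)² = 1 for all g ∈ G. If ψ and ψ' are two bijective χ-twisted equivariant E-linear endomorphisms of V with ψ ∘ ψ = α · id_V and ψ' ∘ ψ' = α' · id_V for α, α' ∈ Eˣ, then there exists c ∈ Eˣ with α' = c² · α; in other words, the class of α in Eˣ/(Eˣ)² does not depend on the choice of the χ-twisted equivariant bijection ψ. -/
/-- let `V` be a nonzero representation of `G` over a field `E` of
characteristic 0 satisfying the Schur condition and `χ : G → Eˣ` a character with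
`χ(g)² = 1` for all `g`.  If `ψ, ψ'` are bijective `χ`-twisted equivariant `E`-linear
endomorphisms with `ψ∘ψ = α·id` and `ψ'∘ψ' = α'·id`, then `α' = c²·α` for some
`c ∈ Eˣ`; i.e. the class of `α` in `Eˣ/(Eˣ)²` is independent of the choice of `ψ`. -/
theorem stmt_7 {E G V : Type*} [Field E] [CharZero E] [Group G]
    [AddCommGroup V] [Module E V] [Nontrivial V]
    (ρ : Representation E G V)
    (hSchur : ∀ f : Module.End E V, (∀ (g : G) (v : V), f (ρ g v) = ρ g (f v)) →
      ∃ c : E, f = c • (1 : Module.End E V))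
    (χ : G →* Eˣ) (hχ : ∀ g : G, χ g * χ g = 1)
    (ψ ψ' : Module.End E V)
    (hbij : Function.Bijective ψ) (hbij' : Function.Bijective ψ')
    (htw : ∀ (g : G) (v : V), ψ (ρ g v) = (χ g : E) • ρ g (ψ v))
    (htw' : ∀ (g : G) (v : V), ψ' (ρ g v) = (χ g : E) • ρ g (ψ' v))
    (α α' : Eˣ)
    (hα : ψ * ψ = (α : E) • (1 : Module.End E V))
    (hα' : ψ' * ψ' = (α' : E) • (1 : Module.End E V)) :
    ∃ c : Eˣ, α' = c ^ 2 * α := by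
  obtain ⟨c, hc⟩ := hSchur (ψ' * ψ) (by
    intro g v
    have h1 : (ψ' * ψ) (ρ g v) = (χ g : E) • ψ' (ρ g (ψ v)) := by
      simp only [Module.End.mul_apply, htw g v, map_smul]
    rw [h1, htw' g (ψ v), smul_smul, ← Units.val_mul, hχ g]
    simp [Module.End.mul_apply])
  have hc0 : c ≠ 0 := by
    rintro rfl
    obtain ⟨v, hv⟩ := exists_ne (0 : V)
    have : ψ' (ψ v) = 0 := by
      have := congrFun (congrArg DFunLike.coe hc) v
      simpa [Module.End.mul_apply] using this
    exact hv (hbij.injective (hbij'.injective (by simpa using this)))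
  -- ψ' = (c/α) • ψ
  have key : ψ' = (c / (α : E)) • ψ := by
    have h2 : ψ' * (ψ * ψ) = c • ψ := by
      rw [← mul_assoc, hc]
      ext v; simp [Module.End.mul_apply]
    rw [hα] at h2
    have h3 : (α : E) • ψ' = c • ψ := by
      rw [← h2]; ext v; simp [Module.End.mul_apply]
    have := congrArg (fun f => ((α : E)⁻¹) • f) h3
    simp only [smul_smul, inv_mul_cancel₀ (α.ne_zero), one_smul] at this
    rw [this]; ring_nf
  have h4 : ((α' : E)) • (1 : Module.End E V) = ((c / (α : E))^2 * (α : E)) • (1 : Module.End E V) := by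
    rw [← hα', key]
    ext v
    have hv2 : ψ (ψ v) = (α : E) • v := by
      have := congrFun (congrArg DFunLike.coe hα) v
      simpa [Module.End.mul_apply] using this
    simp [Module.End.mul_apply, smul_smul, hv2]
    ring_nf
  have h5 : (α' : E) = (c / (α : E))^2 * (α : E) := by
    obtain ⟨v, hv⟩ := exists_ne (0 : V)
    have := congrFun (congrArg DFunLike.coe h4) v
    simp only [LinearMap.smul_apply, Module.End.one_apply] at this
    exact smul_left_injective E hv (by simpa using this)
  refine ⟨Units.mk0 (c / (α : E)) (div_ne_zero hc0 α.ne_zero), ?_⟩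
  ext
  push_cast
  exact h5
end

section
/- Let E be a field of characteristic 0, G a group, and V a finite-dimensional irreducible representation of G over E satisfying the Schur condition over E. Let χ: G → Eˣ be a group homomorphism with χ(g)² = 1 for all g ∈ G and χ(g₀) = −1 for some g₀ ∈ G, set N = ker χ, and let ψ: V → V be a bijective χ-twisted equivariant E-linear map with ψ ∘ ψ = α · id_V. Assume β ∈ Eˣ satisfies β² = α. Then V is the direct sum of the two eigenspaces V₊ = ker(ψ − β·id) and V₋ = ker(ψ + β·id); both eigenspaces are nonzero and stable under the action of N; every g ∈ G with χ(g) = −1 maps V₊ bijectively onto V₋ and V₋ bijectively onto V₊; and V₊ and V₋ are each irreducible as representations of N over E. -/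
/-- Auxiliary lemma: if `U` is a nonzero `N`-stable subspace of `A`, where `A` and `B`
are disjoint, `N`-stable parts swapped by elements with `χ g = -1`, then `U = A`. -/
private lemma aux_irred_stmt8 {E G V : Type*} [Field E] [Group G]
    [AddCommGroup V] [Module E V]
    (ρ : Representation E G V)
    (hirr : ∀ W : Submodule E V, (∀ g : G, ∀ v ∈ W, ρ g v ∈ W) → W = ⊥ ∨ W = ⊤)
    (χ : G →* Eˣ) (hχ : ∀ g : G, χ g = 1 ∨ χ g = -1)
    (g₀ : G) (hg₀ : χ g₀ = -1)
    (A B : Submodule E V) (hAB : Disjoint A B)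
    (hmapAB : ∀ g : G, χ g = -1 → ∀ v ∈ A, ρ g v ∈ B)
    (U : Submodule E V) (hUA : U ≤ A)
    (hUstab : ∀ g : G, χ g = 1 → ∀ v ∈ U, ρ g v ∈ U) :
    U = ⊥ ∨ U = A := by
  by_cases hU : U = ⊥
  · exact Or.inl hU
  right
  set W : Submodule E V := U ⊔ Submodule.map (ρ g₀) U with hW
  have hmulapp : ∀ (g h : G) (v : V), ρ g (ρ h v) = ρ (g * h) v := by
    intro g h v
    rw [map_mul]; rfl
  have hall : ∀ g : G, ∀ u ∈ U, ρ g u ∈ W := by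
    intro g u hu
    rcases hχ g with h1 | h1
    · exact Submodule.mem_sup_left (hUstab g h1 u hu)
    · have h2 : χ (g₀⁻¹ * g) = 1 := by
        rw [map_mul, map_inv, hg₀, h1]; simp
      have h3 : ρ g₀ (ρ (g₀⁻¹ * g) u) = ρ g u := by
        rw [hmulapp]; group
      refine Submodule.mem_sup_right ?_
      rw [← h3]
      exact Submodule.mem_map_of_mem (hUstab _ h2 u hu)
  have hWstab : ∀ g : G, ∀ v ∈ W, ρ g v ∈ W := by
    intro g v hv
    rcases Submodule.mem_sup.mp hv with ⟨a, ha, b, hb, rfl⟩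
    rcases hb with ⟨c, hc, rfl⟩
    rw [map_add]
    refine Submodule.add_mem _ (hall g a ha) ?_
    rw [hmulapp]
    exact hall _ c hc
  have hWne : W ≠ ⊥ := by
    intro h
    exact hU (le_bot_iff.mp (h ▸ (le_sup_left : U ≤ W)))
  have hWtop : W = ⊤ := (hirr W hWstab).resolve_left hWne
  have hAU : A ≤ U := by
    intro v hv
    have hvW : v ∈ W := hWtop ▸ Submodule.mem_top
    rcases Submodule.mem_sup.mp hvW with ⟨a, ha, b, hb, hab⟩
    have hbB : b ∈ B := by
      rcases hb with ⟨c, hc, rfl⟩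
      exact hmapAB g₀ hg₀ c (hUA hc)
    have hbA : b ∈ A := by
      have hb' : b = v - a := eq_sub_of_add_eq' hab
      rw [hb']
      exact Submodule.sub_mem _ hv (hUA ha)
    have hb0 : b = 0 := (Submodule.disjoint_def.mp hAB) b hbA hbB
    rw [← hab, hb0, add_zero]
    exact ha
  exact le_antisymm hUA hAU

/-- eigenspace decomposition of an irreducible representation under a
`χ`-twisted involution-like operator `ψ` with `ψ² = α·id` once a square root `β` of
`α` exists in `E`: `V = V₊ ⊕ V₋`, both eigenspaces are nonzero and stable under
`N = ker χ`, every `g` with `χ(g) = -1` interchanges them bijectively, and each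
eigenspace is irreducible as a representation of `N`. -/
theorem stmt_8 {E G V : Type*} [Field E] [CharZero E] [Group G]
    [AddCommGroup V] [Module E V] [FiniteDimensional E V]
    (ρ : Representation E G V)
    (hnontriv : Nontrivial V)
    (hirr : ∀ W : Submodule E V, (∀ g : G, ∀ v ∈ W, ρ g v ∈ W) → W = ⊥ ∨ W = ⊤)
    (hSchur : ∀ f : Module.End E V, (∀ (g : G) (v : V), f (ρ g v) = ρ g (f v)) →
      ∃ c : E, f = c • (1 : Module.End E V))
    (χ : G →* Eˣ) (hχ : ∀ g : G, χ g * χ g = 1) (g₀ : G) (hg₀ : χ g₀ = -1)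
    (ψ : Module.End E V) (hbij : Function.Bijective ψ)
    (htw : ∀ (g : G) (v : V), ψ (ρ g v) = (χ g : E) • ρ g (ψ v))
    (α : Eˣ) (hα : ψ * ψ = (α : E) • (1 : Module.End E V))
    (β : Eˣ) (hβ : (β : E) ^ 2 = (α : E)) :
    IsCompl (LinearMap.ker (ψ - (β : E) • (1 : Module.End E V)))
        (LinearMap.ker (ψ + (β : E) • (1 : Module.End E V))) ∧
    LinearMap.ker (ψ - (β : E) • (1 : Module.End E V)) ≠ ⊥ ∧
    LinearMap.ker (ψ + (β : E) • (1 : Module.End E V)) ≠ ⊥ ∧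
    (∀ g : G, χ g = 1 → ∀ v ∈ LinearMap.ker (ψ - (β : E) • (1 : Module.End E V)),
      ρ g v ∈ LinearMap.ker (ψ - (β : E) • (1 : Module.End E V))) ∧
    (∀ g : G, χ g = 1 → ∀ v ∈ LinearMap.ker (ψ + (β : E) • (1 : Module.End E V)),
      ρ g v ∈ LinearMap.ker (ψ + (β : E) • (1 : Module.End E V))) ∧
    (∀ g : G, χ g = -1 →
      Submodule.map (ρ g) (LinearMap.ker (ψ - (β : E) • (1 : Module.End E V))) =
        LinearMap.ker (ψ + (β : E) • (1 : Module.End E V)) ∧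
      Submodule.map (ρ g) (LinearMap.ker (ψ + (β : E) • (1 : Module.End E V))) =
        LinearMap.ker (ψ - (β : E) • (1 : Module.End E V))) ∧
    (∀ U : Submodule E V, U ≤ LinearMap.ker (ψ - (β : E) • (1 : Module.End E V)) →
      (∀ g : G, χ g = 1 → ∀ v ∈ U, ρ g v ∈ U) →
      U = ⊥ ∨ U = LinearMap.ker (ψ - (β : E) • (1 : Module.End E V))) ∧
    (∀ U : Submodule E V, U ≤ LinearMap.ker (ψ + (β : E) • (1 : Module.End E V)) →
      (∀ g : G, χ g = 1 → ∀ v ∈ U, ρ g v ∈ U) →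
      U = ⊥ ∨ U = LinearMap.ker (ψ + (β : E) • (1 : Module.End E V))) := by
  set Kp := LinearMap.ker (ψ - (β : E) • (1 : Module.End E V)) with hKpdef
  set Kn := LinearMap.ker (ψ + (β : E) • (1 : Module.End E V)) with hKndef
  -- basic scalar facts
  have hβ0 : (β : E) ≠ 0 := Units.ne_zero β
  have h2β : (2 : E) * (β : E) ≠ 0 := mul_ne_zero two_ne_zero hβ0
  have hχ' : ∀ g : G, χ g = 1 ∨ χ g = -1 := by
    intro g
    have h : (χ g : E) * (χ g : E) = 1 := by rw [← Units.val_mul, hχ g, Units.val_one]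
    rcases mul_self_eq_one_iff.mp h with h1 | h1
    · exact Or.inl (Units.ext (by simpa using h1))
    · exact Or.inr (Units.ext (by simpa using h1))
  have hg₀E : ((χ g₀ : Eˣ) : E) = -1 := by rw [hg₀]; simp
  -- membership characterizations
  have hmp : ∀ v : V, v ∈ Kp ↔ ψ v = (β : E) • v := by
    intro v
    simp [hKpdef, LinearMap.mem_ker, LinearMap.sub_apply, LinearMap.smul_apply, sub_eq_zero]
  have hmn : ∀ v : V, v ∈ Kn ↔ ψ v = -((β : E) • v) := by
    intro v
    simp [hKndef, LinearMap.mem_ker, LinearMap.add_apply, LinearMap.smul_apply,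
      add_eq_zero_iff_eq_neg]
  have hψψ : ∀ v : V, ψ (ψ v) = (α : E) • v := by
    intro v
    have h := LinearMap.ext_iff.mp hα v
    simpa [Module.End.mul_apply, LinearMap.smul_apply] using h
  have hcancel : ∀ w : V, (β : E) • w = -((β : E) • w) → w = 0 := by
    intro w hw
    have h1 : ((2 : E) * (β : E)) • w = 0 := by
      rw [two_mul, add_smul]
      exact add_eq_zero_iff_eq_neg.mpr hw
    rcases smul_eq_zero.mp h1 with h | h
    · exact absurd h h2β
    · exact h
  -- decomposition
  have hdisj : Disjoint Kp Kn := by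
    rw [Submodule.disjoint_def]
    intro v hvp hvn
    have h1 := (hmp v).mp hvp
    have h2 := (hmn v).mp hvn
    exact hcancel v (h1 ▸ h2)
  have htop : Kp ⊔ Kn = ⊤ := by
    rw [eq_top_iff]
    intro v _
    have ha : ψ v + (β : E) • v ∈ Kp := by
      rw [hmp, map_add, map_smul, hψψ, ← hβ]
      rw [smul_add, smul_smul, pow_two]
      abel
    have hb : (β : E) • v - ψ v ∈ Kn := by
      rw [hmn, map_sub, map_smul, hψψ, ← hβ]
      rw [smul_sub, neg_sub, smul_smul, pow_two]
    have hsum : (ψ v + (β : E) • v) + ((β : E) • v - ψ v) = ((2 : E) * (β : E)) • v := by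
      rw [two_mul, add_smul]
      abel
    have hv' : v = ((2 : E) * (β : E))⁻¹ • ((ψ v + (β : E) • v) + ((β : E) • v - ψ v)) := by
      rw [hsum, smul_smul, inv_mul_cancel₀ h2β, one_smul]
    rw [hv']
    exact Submodule.smul_mem _ _
      (Submodule.add_mem _ (Submodule.mem_sup_left ha) (Submodule.mem_sup_right hb))
  -- group action basics
  have hmulapp : ∀ (g h : G) (v : V), ρ g (ρ h v) = ρ (g * h) v := by
    intro g h v
    rw [map_mul]; rfl
  have hρinv : ∀ (g : G) (v : V), ρ g⁻¹ (ρ g v) = v := by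
    intro g v
    rw [hmulapp, inv_mul_cancel, map_one]
    rfl
  have hρinv' : ∀ (g : G) (v : V), ρ g (ρ g⁻¹ v) = v := by
    intro g v
    rw [hmulapp, mul_inv_cancel, map_one]
    rfl
  have hρ0 : ∀ (g : G) (v : V), ρ g v = 0 → v = 0 := by
    intro g v h
    have h2 := hρinv g v
    rw [h, map_zero] at h2
    exact h2.symm
  -- nonzero eigenspaces
  have hKpne : Kp ≠ ⊥ := by
    intro h
    have hKntop : Kn = ⊤ := by rwa [h, bot_sup_eq] at htop
    obtain ⟨v, hv⟩ := exists_ne (0 : V)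
    have h1 : ψ (ρ g₀ v) = -((β : E) • ρ g₀ v) := (hmn _).mp (hKntop ▸ Submodule.mem_top)
    have h2 : ψ v = -((β : E) • v) := (hmn v).mp (hKntop ▸ Submodule.mem_top)
    have h3 : ψ (ρ g₀ v) = (β : E) • ρ g₀ v := by
      rw [htw, h2, hg₀E, map_neg, map_smul, neg_one_smul, neg_neg]
    exact hv (hρ0 g₀ v (hcancel _ (h3 ▸ h1)))
  have hKnne : Kn ≠ ⊥ := by
    intro h
    have hKptop : Kp = ⊤ := by rwa [h, sup_bot_eq] at htop
    obtain ⟨v, hv⟩ := exists_ne (0 : V)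
    have h1 : ψ (ρ g₀ v) = (β : E) • ρ g₀ v := (hmp _).mp (hKptop ▸ Submodule.mem_top)
    have h2 : ψ v = (β : E) • v := (hmp v).mp (hKptop ▸ Submodule.mem_top)
    have h3 : ψ (ρ g₀ v) = -((β : E) • ρ g₀ v) := by
      rw [htw, h2, hg₀E, map_smul, neg_one_smul]
    exact hv (hρ0 g₀ v (hcancel _ (h3 ▸ h1).symm))
  -- stability under N
  have hstabP : ∀ g : G, χ g = 1 → ∀ v ∈ Kp, ρ g v ∈ Kp := by
    intro g hg v hv
    rw [hmp] at hv ⊢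
    rw [htw, hv, hg, map_smul]
    simp
  have hstabN : ∀ g : G, χ g = 1 → ∀ v ∈ Kn, ρ g v ∈ Kn := by
    intro g hg v hv
    rw [hmn] at hv ⊢
    rw [htw, hv, hg, map_neg, map_smul]
    simp
  -- swapping
  have hgE : ∀ g : G, χ g = -1 → ((χ g : Eˣ) : E) = -1 := by
    intro g hg; rw [hg]; simp
  have hPN : ∀ g : G, χ g = -1 → ∀ v ∈ Kp, ρ g v ∈ Kn := by
    intro g hg v hv
    rw [hmp] at hv
    rw [hmn, htw, hv, hgE g hg, map_smul, neg_one_smul]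
  have hNP : ∀ g : G, χ g = -1 → ∀ v ∈ Kn, ρ g v ∈ Kp := by
    intro g hg v hv
    rw [hmn] at hv
    rw [hmp, htw, hv, hgE g hg, map_neg, map_smul, neg_one_smul, neg_neg]
  have hginv : ∀ g : G, χ g = -1 → χ g⁻¹ = -1 := by
    intro g hg
    rw [map_inv, inv_eq_of_mul_eq_one_right (hχ g), hg]
  have hmapeq : ∀ g : G, χ g = -1 →
      Submodule.map (ρ g) Kp = Kn ∧ Submodule.map (ρ g) Kn = Kp := by
    intro g hg
    constructor
    · apply le_antisymm
      · rintro _ ⟨v, hv, rfl⟩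
        exact hPN g hg v hv
      · intro w hw
        exact ⟨ρ g⁻¹ w, hNP g⁻¹ (hginv g hg) w hw, hρinv' g w⟩
    · apply le_antisymm
      · rintro _ ⟨v, hv, rfl⟩
        exact hNP g hg v hv
      · intro w hw
        exact ⟨ρ g⁻¹ w, hPN g⁻¹ (hginv g hg) w hw, hρinv' g w⟩
  refine ⟨⟨hdisj, codisjoint_iff.mpr htop⟩, hKpne, hKnne, hstabP, hstabN, hmapeq,
    fun U hU hUs => aux_irred_stmt8 ρ hirr χ hχ' g₀ hg₀ Kp Kn hdisj hPN U hU hUs,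
    fun U hU hUs => aux_irred_stmt8 ρ hirr χ hχ' g₀ hg₀ Kn Kp hdisj.symm hNP U hU hUs⟩
end

section
/- Let E be a field of characteristic 0, G a group, V a nonzero representation of G over E, and χ: G → Eˣ a group homomorphism with χ(g)² = 1 for all g ∈ G and χ(g₀) = −1 for some g₀ ∈ G; set N = ker χ. Let ψ: V → V be a bijective χ-twisted equivariant E-linear map with ψ ∘ ψ = α · id_V for some α ∈ Eˣ. Suppose V = W₁ ⊕ W₂, where W₁ and W₂ are nonzero N-stable subspaces such that every N-equivariant E-linear map W₁ → W₂ is zero, every N-equivariant E-linear map W₂ → W₁ is zero, and every N-equivariant E-linear endomorphism of W₁, and likewise of W₂, is multiplication by a scalar in E. Then there exists x ∈ Eˣ with x² = α such that ψ restricts to x·id on one of W₁, W₂ and to −x·id on the other; in particular, α is a square in Eˣ. -/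
/-!
Since `χ` is trivial on `N`, the map `ψ` commutes with `N`. The projection of `V` onto `W₂`
along `W₁` commutes with `N` as well, so the block `W₁ → V → W₂` of `ψ` is `N`-equivariant,
hence zero; thus `ψ` preserves `W₁` and `W₂`, and acts on them by scalars `c₁`, `c₂`, with
`c₁² = α`. If `v ∈ W₁` is nonzero, then `ρ g₀ v` is an eigenvector of `ψ` for `-c₁`. Eigenspaces
for distinct eigenvalues are independent and `W₁ ⊕ W₂ = V`, so `-c₁ ∈ {c₁, c₂}`; in
characteristic `0` this forces `c₂ = -c₁`.
-/

open Module End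

section Projection

variable {R E ι : Type*} [Ring R] [AddCommGroup E] [Module R E] {p q : Submodule R E}

theorem Submodule.commute_projection_of_mem_invtSubmodule (h : IsCompl p q) {T : End R E}
    (hp : p ∈ invtSubmodule T) (hq : q ∈ invtSubmodule T) : Commute (p.projection q h) T :=
  (LinearMap.IsIdempotentElem.commute_iff (isIdempotentElem_projection h)).2
    ⟨by rwa [range_projection], by rwa [ker_projection]⟩

theorem Submodule.mem_invtSubmodule_of_intertwiners_eq_zero (h : IsCompl p q)
    {T : ι → End R E} (hp : ∀ i, p ∈ invtSubmodule (T i))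
    (hq : ∀ i, q ∈ invtSubmodule (T i)) {ψ : End R E} (hψ : ∀ i, Commute ψ (T i))
    (hHom : ∀ f : p →ₗ[R] q,
      (∀ i (v : p), (f ⟨T i v, hp i v.2⟩ : E) = T i (f v)) → f = 0) :
    p ∈ invtSubmodule ψ := by
  have hzero := hHom (q.projectionOnto p h.symm ∘ₗ ψ ∘ₗ p.subtype) fun i v => by
    simp only [LinearMap.comp_apply, coe_subtype, coe_projectionOnto_apply]
    rw [← mul_apply ψ, (hψ i).eq, mul_apply, ← mul_apply (q.projection p h.symm),
      (q.commute_projection_of_mem_invtSubmodule h.symm (hq i) (hp i)).eq, mul_apply]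
  refine (mem_invtSubmodule_iff_forall_mem_of_mem ψ).2 fun v hv => ?_
  rw [← projectionOnto_apply_eq_zero_iff h.symm]
  exact congr($hzero ⟨v, hv⟩)

end Projection

namespace Module.End

variable {R E ι : Type*} [CommRing R] [AddCommGroup E] [Module R E] {ψ : End R E}

theorem exists_le_eigenspace_of_commute {p : Submodule R E} {T : ι → End R E}
    (hp : ∀ i, p ∈ invtSubmodule (T i)) (hψp : p ∈ invtSubmodule ψ)
    (hψ : ∀ i, Commute ψ (T i))
    (hEnd : ∀ f : p →ₗ[R] p, (∀ i (v : p), (f ⟨T i v, hp i v.2⟩ : E) = T i (f v)) →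
      ∃ c : R, ∀ v : p, (f v : E) = c • (v : E)) :
    ∃ c, p ≤ ψ.eigenspace c := by
  obtain ⟨c, hc⟩ := hEnd (ψ.restrict hψp) fun i v => LinearMap.congr_fun (hψ i).eq v
  exact ⟨c, fun v hv => mem_eigenspace_iff.2 (hc ⟨v, hv⟩)⟩

theorem apply_mem_eigenspace_mul {T : End R E} {a c : R} (hT : ∀ v, ψ (T v) = a • T (ψ v))
    {v : E} (hv : v ∈ ψ.eigenspace c) : T v ∈ ψ.eigenspace (a * c) := by
  rw [mem_eigenspace_iff] at hv ⊢
  rw [hT, hv, map_smul, smul_smul]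

variable [IsDomain R] [IsTorsionFree R E]

theorem sq_eq_of_mul_self_eq_smul_one {a c : R} (hψ : ψ * ψ = a • 1) {v : E}
    (hv : v ∈ ψ.eigenspace c) (hv₀ : v ≠ 0) : c ^ 2 = a := by
  refine smul_left_injective R hv₀ ?_
  have hv' := mem_eigenspace_iff.1 hv
  calc c ^ 2 • v = ψ (ψ v) := by rw [hv', map_smul, hv', smul_smul, sq]
    _ = a • v := by simpa using congr($hψ v)

theorem HasEigenvalue.eq_or_eq_of_isCompl {p q : Submodule R E} (h : IsCompl p q)
    {c₁ c₂ μ : R} (hp : p ≤ ψ.eigenspace c₁) (hq : q ≤ ψ.eigenspace c₂)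
    (hμ : ψ.HasEigenvalue μ) : μ = c₁ ∨ μ = c₂ := by
  by_contra! hne
  have hdisj : Disjoint (ψ.eigenspace μ) (⨆ c ∈ ({c₁, c₂} : Set R), ψ.eigenspace c) :=
    ψ.eigenspaces_iSupIndep.disjoint_biSup (by simpa using hne)
  have htop : (⨆ c ∈ ({c₁, c₂} : Set R), ψ.eigenspace c) = ⊤ := by
    refine eq_top_iff.2 (h.sup_eq_top ▸ sup_le ?_ ?_)
    · exact hp.trans (le_biSup ψ.eigenspace (by simp))
    · exact hq.trans (le_biSup ψ.eigenspace (by simp))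
  exact hasEigenvalue_iff.1 hμ (disjoint_top.1 (htop ▸ hdisj))

end Module.End

theorem stmt_9_general {E G V : Type*} [Field E] [CharZero E] [Group G]
    [AddCommGroup V] [Module E V]
    (ρ : Representation E G V)
    (χ : G →* Eˣ) (g₀ : G) (hg₀ : χ g₀ = -1)
    (ψ : Module.End E V)
    (htw : ∀ (g : G) (v : V), ψ (ρ g v) = (χ g : E) • ρ g (ψ v))
    (α : Eˣ) (hα : ψ * ψ = (α : E) • (1 : Module.End E V))
    (W₁ W₂ : Submodule E V) (hW₁ne : W₁ ≠ ⊥)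
    (hW₁st : ∀ g : G, χ g = 1 → ∀ v ∈ W₁, ρ g v ∈ W₁)
    (hW₂st : ∀ g : G, χ g = 1 → ∀ v ∈ W₂, ρ g v ∈ W₂)
    (hcompl : IsCompl W₁ W₂)
    (hHom12 : ∀ f : W₁ →ₗ[E] W₂,
      (∀ (g : G) (hg : χ g = 1) (v : W₁),
        (f ⟨ρ g (v : V), hW₁st g hg (v : V) v.2⟩ : V) = ρ g ((f v : V))) → f = 0)
    (hHom21 : ∀ f : W₂ →ₗ[E] W₁,
      (∀ (g : G) (hg : χ g = 1) (v : W₂),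
        (f ⟨ρ g (v : V), hW₂st g hg (v : V) v.2⟩ : V) = ρ g ((f v : V))) → f = 0)
    (hEnd1 : ∀ f : W₁ →ₗ[E] W₁,
      (∀ (g : G) (hg : χ g = 1) (v : W₁),
        (f ⟨ρ g (v : V), hW₁st g hg (v : V) v.2⟩ : V) = ρ g ((f v : V))) →
      ∃ c : E, ∀ v : W₁, (f v : V) = c • (v : V))
    (hEnd2 : ∀ f : W₂ →ₗ[E] W₂,
      (∀ (g : G) (hg : χ g = 1) (v : W₂),
        (f ⟨ρ g (v : V), hW₂st g hg (v : V) v.2⟩ : V) = ρ g ((f v : V))) →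
      ∃ c : E, ∀ v : W₂, (f v : V) = c • (v : V)) :
    ∃ x : Eˣ, (x : E) ^ 2 = (α : E) ∧
      (((∀ v ∈ W₁, ψ v = (x : E) • v) ∧ (∀ v ∈ W₂, ψ v = -((x : E) • v))) ∨
       ((∀ v ∈ W₁, ψ v = -((x : E) • v)) ∧ (∀ v ∈ W₂, ψ v = (x : E) • v))) := by
  have hcomm : ∀ g : {g : G // χ g = 1}, Commute ψ (ρ g) := fun g =>
    LinearMap.ext fun v => by simpa [g.2] using htw g v
  have hW₁N : ∀ g : {g : G // χ g = 1}, W₁ ∈ invtSubmodule (ρ g) := fun g => hW₁st g.1 g.2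
  have hW₂N : ∀ g : {g : G // χ g = 1}, W₂ ∈ invtSubmodule (ρ g) := fun g => hW₂st g.1 g.2
  have hW₁ψ := W₁.mem_invtSubmodule_of_intertwiners_eq_zero hcompl hW₁N hW₂N hcomm
    fun f hf => hHom12 f fun g hg => hf ⟨g, hg⟩
  have hW₂ψ := W₂.mem_invtSubmodule_of_intertwiners_eq_zero hcompl.symm hW₂N hW₁N hcomm
    fun f hf => hHom21 f fun g hg => hf ⟨g, hg⟩
  obtain ⟨c₁, hc₁⟩ := exists_le_eigenspace_of_commute hW₁N hW₁ψ hcomm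
    fun f hf => hEnd1 f fun g hg => hf ⟨g, hg⟩
  obtain ⟨c₂, hc₂⟩ := exists_le_eigenspace_of_commute hW₂N hW₂ψ hcomm
    fun f hf => hEnd2 f fun g hg => hf ⟨g, hg⟩
  obtain ⟨v₁, hv₁W, hv₁⟩ := Submodule.exists_mem_ne_zero_of_ne_bot hW₁ne
  have hsq : c₁ ^ 2 = α := sq_eq_of_mul_self_eq_smul_one hα (hc₁ hv₁W) hv₁
  have hc₁0 : c₁ ≠ 0 := by
    rintro rfl
    exact α.ne_zero (by simpa using hsq.symm)
  have hneg : ψ.HasEigenvalue (-c₁) := by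
    refine hasEigenvalue_of_hasEigenvector (x := ρ g₀ v₁) ⟨?_, fun h => hv₁ ?_⟩
    · simpa [hg₀] using apply_mem_eigenspace_mul (htw g₀) (hc₁ hv₁W)
    · simpa using congr(ρ g₀⁻¹ $h)
  have hc₂eq : -c₁ = c₂ := (hneg.eq_or_eq_of_isCompl hcompl hc₁ hc₂).resolve_left
    (by simpa [CharZero.neg_eq_self_iff] using hc₁0)
  refine ⟨Units.mk0 c₁ hc₁0, hsq,
    Or.inl ⟨fun v hv => mem_eigenspace_iff.1 (hc₁ hv), fun v hv => ?_⟩⟩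
  rw [Units.val_mk0, ← neg_smul, hc₂eq]
  exact mem_eigenspace_iff.1 (hc₂ hv)

/-- if `V = W₁ ⊕ W₂` with `W₁, W₂` nonzero `N`-stable (`N = ker χ`)
subspaces such that there are no nonzero `N`-equivariant maps between `W₁` and `W₂`
and all `N`-equivariant endomorphisms of `W₁` and of `W₂` are scalars, then a bijective
`χ`-twisted equivariant `ψ` with `ψ² = α·id` acts as `x·id` on one summand and as
`-x·id` on the other, for some `x ∈ Eˣ` with `x² = α`; in particular `α` is a square. -/
theorem stmt_9 {E G V : Type*} [Field E] [CharZero E] [Group G]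
    [AddCommGroup V] [Module E V] [Nontrivial V]
    (ρ : Representation E G V)
    (χ : G →* Eˣ) (hχ : ∀ g : G, χ g * χ g = 1) (g₀ : G) (hg₀ : χ g₀ = -1)
    (ψ : Module.End E V) (hbij : Function.Bijective ψ)
    (htw : ∀ (g : G) (v : V), ψ (ρ g v) = (χ g : E) • ρ g (ψ v))
    (α : Eˣ) (hα : ψ * ψ = (α : E) • (1 : Module.End E V))
    (W₁ W₂ : Submodule E V) (hW₁ne : W₁ ≠ ⊥) (hW₂ne : W₂ ≠ ⊥)
    (hW₁st : ∀ g : G, χ g = 1 → ∀ v ∈ W₁, ρ g v ∈ W₁)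
    (hW₂st : ∀ g : G, χ g = 1 → ∀ v ∈ W₂, ρ g v ∈ W₂)
    (hcompl : IsCompl W₁ W₂)
    (hHom12 : ∀ f : W₁ →ₗ[E] W₂,
      (∀ (g : G) (hg : χ g = 1) (v : W₁),
        (f ⟨ρ g (v : V), hW₁st g hg (v : V) v.2⟩ : V) = ρ g ((f v : V))) → f = 0)
    (hHom21 : ∀ f : W₂ →ₗ[E] W₁,
      (∀ (g : G) (hg : χ g = 1) (v : W₂),
        (f ⟨ρ g (v : V), hW₂st g hg (v : V) v.2⟩ : V) = ρ g ((f v : V))) → f = 0)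
    (hEnd1 : ∀ f : W₁ →ₗ[E] W₁,
      (∀ (g : G) (hg : χ g = 1) (v : W₁),
        (f ⟨ρ g (v : V), hW₁st g hg (v : V) v.2⟩ : V) = ρ g ((f v : V))) →
      ∃ c : E, ∀ v : W₁, (f v : V) = c • (v : V))
    (hEnd2 : ∀ f : W₂ →ₗ[E] W₂,
      (∀ (g : G) (hg : χ g = 1) (v : W₂),
        (f ⟨ρ g (v : V), hW₂st g hg (v : V) v.2⟩ : V) = ρ g ((f v : V))) →
      ∃ c : E, ∀ v : W₂, (f v : V) = c • (v : V)) :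
    ∃ x : Eˣ, (x : E) ^ 2 = (α : E) ∧
      (((∀ v ∈ W₁, ψ v = (x : E) • v) ∧ (∀ v ∈ W₂, ψ v = -((x : E) • v))) ∨
       ((∀ v ∈ W₁, ψ v = -((x : E) • v)) ∧ (∀ v ∈ W₂, ψ v = (x : E) • v))) :=
  stmt_9_general ρ χ g₀ hg₀ ψ htw α hα W₁ W₂ hW₁ne hW₁st hW₂st hcompl hHom12 hHom21 hEnd1 hEnd2
end

section
/- Let E be a field of characteristic different from 2, G a group, and χ: G → Eˣ a group homomorphism with χ(g)² = 1 for all g ∈ G and χ(g₀) = −1 for some g₀ ∈ G; set N = ker χ. Let V be a finite-dimensional irreducible representation of G over E and let W be a nonzero N-stable subspace of V with W ≠ V. Then W is irreducible as a representation of N over E, the subspace g₀·W is N-stable, and V = W ⊕ g₀·W. In particular, the restriction of V to N is a semisimple representation of N of length at most 2. -/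
/-- Clifford theory for an index-two kernel: if `V` is a
finite-dimensional irreducible representation of `G` over a field `E` of
characteristic ≠ 2, `χ : G → Eˣ` squares to `1` and takes the value `-1` at `g₀`, and
`W` is a nonzero proper `N`-stable subspace (`N = ker χ`), then `W` is irreducible over
`N`, `g₀·W` is `N`-stable, and `V = W ⊕ g₀·W`. -/
theorem stmt_10 {E G V : Type*} [Field E] (hchar : ringChar E ≠ 2) [Group G]
    [AddCommGroup V] [Module E V] [FiniteDimensional E V]
    (ρ : Representation E G V)
    (hnontriv : Nontrivial V)
    (hirr : ∀ U : Submodule E V, (∀ g : G, ∀ v ∈ U, ρ g v ∈ U) → U = ⊥ ∨ U = ⊤)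
    (χ : G →* Eˣ) (hχ : ∀ g : G, χ g * χ g = 1) (g₀ : G) (hg₀ : χ g₀ = -1)
    (W : Submodule E V) (hWbot : W ≠ ⊥) (hWtop : W ≠ ⊤)
    (hWst : ∀ g : G, χ g = 1 → ∀ v ∈ W, ρ g v ∈ W) :
    (∀ U : Submodule E V, U ≤ W → (∀ g : G, χ g = 1 → ∀ v ∈ U, ρ g v ∈ U) →
      U = ⊥ ∨ U = W) ∧
    (∀ g : G, χ g = 1 → ∀ v ∈ Submodule.map (ρ g₀) W,
      ρ g v ∈ Submodule.map (ρ g₀) W) ∧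
    IsCompl W (Submodule.map (ρ g₀) W) := by
  classical
  -- dichotomy for χ
  have hneg : ∀ g : G, χ g ≠ 1 → χ g = -1 := by
    intro g hg
    have h : ((χ g : E)) * (χ g : E) = 1 := by rw [← Units.val_mul, hχ g, Units.val_one]
    rcases mul_self_eq_one_iff.mp h with h1 | h1
    · exact absurd (Units.ext (by simpa using h1)) hg
    · exact Units.ext (by simpa using h1)
  have hinv : χ (g₀⁻¹) = -1 := by
    rw [map_inv, hg₀]; simp [inv_neg]
  -- key: for χ g = -1, ρ g sends U into map (ρ g₀) U, and map (ρ g₀) U into U,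
  -- provided U is N-stable
  have key1 : ∀ (U : Submodule E V), (∀ g : G, χ g = 1 → ∀ v ∈ U, ρ g v ∈ U) →
      ∀ g : G, χ g = -1 → ∀ v ∈ U, ρ g v ∈ Submodule.map (ρ g₀) U := by
    intro U hU g hg v hv
    refine ⟨ρ (g₀⁻¹ * g) v, hU _ ?_ v hv, ?_⟩
    · rw [map_mul, hinv, hg]; simp
    · rw [← Module.End.mul_apply, ← map_mul, mul_inv_cancel_left]
  have key2 : ∀ (U : Submodule E V), (∀ g : G, χ g = 1 → ∀ v ∈ U, ρ g v ∈ U) →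
      ∀ g : G, χ g = -1 → ∀ v ∈ Submodule.map (ρ g₀) U, ρ g v ∈ U := by
    rintro U hU g hg v ⟨w, hw, rfl⟩
    rw [← Module.End.mul_apply, ← map_mul]
    refine hU _ ?_ w hw
    rw [map_mul, hg, hg₀]; simp
  -- map (ρ g₀) U is N-stable whenever U is
  have mapst : ∀ (U : Submodule E V), (∀ g : G, χ g = 1 → ∀ v ∈ U, ρ g v ∈ U) →
      ∀ g : G, χ g = 1 → ∀ v ∈ Submodule.map (ρ g₀) U, ρ g v ∈ Submodule.map (ρ g₀) U := by
    rintro U hU g hg v ⟨w, hw, rfl⟩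
    refine ⟨ρ (g₀⁻¹ * g * g₀) w, hU _ ?_ w hw, ?_⟩
    · rw [map_mul, map_mul, hinv, hg, hg₀]; simp
    · rw [← Module.End.mul_apply, ← map_mul, ← Module.End.mul_apply, ← map_mul]
      congr 1; group
  -- for nonzero N-stable U, U ⊔ map (ρ g₀) U = ⊤
  have main : ∀ (U : Submodule E V), U ≠ ⊥ → (∀ g : G, χ g = 1 → ∀ v ∈ U, ρ g v ∈ U) →
      U ⊔ Submodule.map (ρ g₀) U = ⊤ := by
    intro U hUbot hU
    have hst : ∀ g : G, ∀ v ∈ U ⊔ Submodule.map (ρ g₀) U, ρ g v ∈ U ⊔ Submodule.map (ρ g₀) U := by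
      intro g v hv
      rcases Submodule.mem_sup.mp hv with ⟨a, ha, b, hb, rfl⟩
      rw [map_add]
      by_cases hg : χ g = 1
      · exact add_mem (Submodule.mem_sup_left (hU g hg a ha))
          (Submodule.mem_sup_right (mapst U hU g hg b hb))
      · exact add_mem (Submodule.mem_sup_right (key1 U hU g (hneg g hg) a ha))
          (Submodule.mem_sup_left (key2 U hU g (hneg g hg) b hb))
    rcases hirr _ hst with h | h
    · exact absurd (eq_bot_iff.mpr (le_sup_left.trans h.le)) hUbot
    · exact h
  -- W ⊓ map (ρ g₀) W = ⊥
  have hinf : W ⊓ Submodule.map (ρ g₀) W = ⊥ := by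
    have hst : ∀ g : G, ∀ v ∈ W ⊓ Submodule.map (ρ g₀) W, ρ g v ∈ W ⊓ Submodule.map (ρ g₀) W := by
      intro g v hv
      by_cases hg : χ g = 1
      · exact ⟨hWst g hg v hv.1, mapst W hWst g hg v hv.2⟩
      · exact ⟨key2 W hWst g (hneg g hg) v hv.2, key1 W hWst g (hneg g hg) v hv.1⟩
    rcases hirr _ hst with h | h
    · exact h
    · exact absurd (eq_top_iff.mpr (h.ge.trans inf_le_left)) hWtop
  have hsup : W ⊔ Submodule.map (ρ g₀) W = ⊤ := main W hWbot hWst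
  refine ⟨?_, mapst W hWst, ⟨disjoint_iff.mpr hinf, codisjoint_iff.mpr hsup⟩⟩
  intro U hUW hU
  by_cases hUbot : U = ⊥
  · exact Or.inl hUbot
  refine Or.inr (le_antisymm hUW ?_)
  intro w hw
  have := main U hUbot hU
  rcases Submodule.mem_sup.mp (this ▸ Submodule.mem_top : w ∈ U ⊔ Submodule.map (ρ g₀) U)
    with ⟨a, ha, b, hb, rfl⟩
  have hbW : b ∈ W := by
    have : a + b - a ∈ W := sub_mem hw (hUW ha)
    simpa using this
  have hbW' : b ∈ Submodule.map (ρ g₀) W := Submodule.map_mono hUW hb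
  have : b = 0 := by
    have : b ∈ W ⊓ Submodule.map (ρ g₀) W := ⟨hbW, hbW'⟩
    simpa [hinf] using this
  simpa [this] using ha
end

section
/- Let E be a field of characteristic 0, G a group, and V a finite-dimensional irreducible representation of G over E. Let χ: G → Eˣ be a group homomorphism with χ(g)² = 1 for all g ∈ G and χ(g₀) = −1 for some g₀ ∈ G; set N = ker χ. Let ψ: V → V be a bijective χ-twisted equivariant E-linear map with ψ ∘ ψ = α · id_V, where α ∈ Eˣ is not a square in E. Let F = E(β) be a quadratic extension of E generated by an element β with β² = α, and let ψ_F denote the F-linear extension of ψ to F ⊗_E V. Assume that the two eigenspaces ker(ψ_F − β·id) and ker(ψ_F + β·id) in F ⊗_E V are irreducible and mutually non-isomorphic as representations of N over F. Then V is irreducible as a representation of N over E. -/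
/-!
Since `β² = α` and `2β ≠ 0`, the operator `ψ_F` splits `F ⊗ V` as `P ⊕ M`, its `β`- and
`-β`-eigenspaces, and both are `N`-stable because `ψ` commutes with `N`. For simple,
non-isomorphic `P` and `M`, an `N`-stable subspace of `P ⊕ M` is `0`, `P`, `M` or everything:
if it meets neither summand and projects onto both, it is the graph of an `N`-isomorphism
`P ≅ M`. Apply this to `U_F` for an `N`-stable `U ⊆ V`. A vector `1 ⊗ u` with
`ψ_F (1 ⊗ u) = ±β ⊗ u` has `u = 0` because `β ∉ E`, so `U_F ∈ {P, M}` forces `U = 0`; and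
`U_F ∈ {0, F ⊗ V}` forces `U ∈ {0, V}` since `F` is faithfully flat over `E`.
-/

open scoped TensorProduct

open Polynomial in
theorem Module.End.isCompl_ker_sub_smul_ker_add_smul {K W : Type*} [Field K] [AddCommGroup W]
    [Module K W] [NeZero (2 : K)] (T : Module.End K W) {b : K} (hb : b ≠ 0)
    (hT : T * T = b ^ 2 • 1) :
    IsCompl (LinearMap.ker (T - b • LinearMap.id)) (LinearMap.ker (T + b • LinearMap.id)) := by
  have hcop : IsCoprime (X - C b) (X + C b) := by
    simpa using isCoprime_X_sub_C_of_isUnit_sub (a := b) (b := -b)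
      (by simpa [← two_mul] using ⟨two_ne_zero, hb⟩)
  have hprod : aeval T ((X - C b) * (X + C b)) = 0 := by
    have : (X - C b) * (X + C b) = X ^ 2 - C (b ^ 2) := by simp only [map_pow]; ring
    simp [this, pow_two, hT, Algebra.algebraMap_eq_smul_one, smul_smul]
  have hsup := sup_ker_aeval_eq_ker_aeval_mul_of_coprime T hcop
  have hdis := disjoint_ker_aeval_of_isCoprime T hcop
  simp only [map_sub, map_add, aeval_X, aeval_C, Module.algebraMap_end_eq_smul_id, hprod,
    LinearMap.ker_zero] at hsup hdis
  exact ⟨hdis, codisjoint_iff.mpr hsup⟩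

namespace Submodule

variable {R W : Type*} [Ring R] [AddCommGroup W] [Module R W] {P M U : Submodule R W}

noncomputable def projectionEquivOfDisjoint (hPM : IsCompl P M) (hUM : Disjoint U M)
    (hUP : U.map (P.projection M hPM) = P) : U ≃ₗ[R] P :=
  LinearEquiv.ofBijective (P.projectionOnto M hPM ∘ₗ U.subtype) <| by
    refine ⟨(injective_iff_map_eq_zero _).mpr fun u hu => ?_, fun p => ?_⟩
    · rw [LinearMap.comp_apply, projectionOnto_apply_eq_zero_iff] at hu
      exact Subtype.ext ((disjoint_def.mp hUM) u u.2 hu)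
    · obtain ⟨u, hu, hup⟩ : (p : W) ∈ U.map (P.projection M hPM) := by rw [hUP]; exact p.2
      exact ⟨⟨u, hu⟩, Subtype.ext hup⟩

@[simp]
theorem coe_projectionEquivOfDisjoint_apply (hPM : IsCompl P M) (hUM : Disjoint U M)
    (hUP : U.map (P.projection M hPM) = P) (u : U) :
    (projectionEquivOfDisjoint hPM hUM hUP u : W) = P.projection M hPM u :=
  rfl

end Submodule

namespace Representation

variable {K H W : Type*} [CommRing K] [Monoid H] [AddCommGroup W] [Module K W]
  (σ : Representation K H W)

def IsInvariant (U : Submodule K W) : Prop :=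
  ∀ h, ∀ x ∈ U, σ h x ∈ U

variable {σ}

theorem IsInvariant.inf {U U' : Submodule K W} (hU : σ.IsInvariant U) (hU' : σ.IsInvariant U') :
    σ.IsInvariant (U ⊓ U') :=
  fun h x hx => ⟨hU h x hx.1, hU' h x hx.2⟩

theorem IsInvariant.map {U : Submodule K W} (hU : σ.IsInvariant U) {f : Module.End K W}
    (hf : ∀ h, Commute f (σ h)) : σ.IsInvariant (U.map f) := by
  rintro h _ ⟨x, hx, rfl⟩
  exact ⟨σ h x, hU h x hx, LinearMap.congr_fun (hf h).eq x⟩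

theorem isInvariant_ker {f : Module.End K W} (hf : ∀ h, Commute f (σ h)) :
    σ.IsInvariant (LinearMap.ker f) := by
  intro h x hx
  rw [LinearMap.mem_ker] at hx ⊢
  rw [← Module.End.mul_apply, (hf h).eq, Module.End.mul_apply, hx, map_zero]

theorem commute_projection {P M : Submodule K W} (hPM : IsCompl P M) (hP : σ.IsInvariant P)
    (hM : σ.IsInvariant M) (h : H) : Commute (P.projection M hPM) (σ h) := by
  rw [LinearMap.IsIdempotentElem.commute_iff (Submodule.isIdempotentElem_projection hPM),
    Submodule.range_projection, Submodule.ker_projection,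
    Module.End.mem_invtSubmodule_iff_forall_mem_of_mem,
    Module.End.mem_invtSubmodule_iff_forall_mem_of_mem]
  exact ⟨hP h, hM h⟩

end Representation


namespace Representation

variable {K H W : Type*} [CommRing K] [Monoid H] [AddCommGroup W] [Module K W]
  {σ : Representation K H W} {P M U : Submodule K W}

theorem exists_intertwining_of_disjoint (hPM : IsCompl P M) (hP : σ.IsInvariant P)
    (hM : σ.IsInvariant M) (hU : σ.IsInvariant U) (hUP : Disjoint U P) (hUM : Disjoint U M)
    (hPU : U.map (P.projection M hPM) = P) (hMU : U.map (M.projection P hPM.symm) = M) :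
    ∃ f : P →ₗ[K] W, Function.Injective f ∧ LinearMap.range f = M ∧
      ∀ h (v w : P), (w : W) = σ h v → f w = σ h (f v) := by
  set eP := Submodule.projectionEquivOfDisjoint hPM hUM hPU
  set eM := Submodule.projectionEquivOfDisjoint hPM.symm hUP hMU
  refine ⟨M.subtype ∘ₗ (eP.symm.trans eM).toLinearMap,
    M.injective_subtype.comp (eP.symm.trans eM).injective, ?_, fun h v w hw => ?_⟩
  · rw [LinearMap.range_comp_of_range_eq_top _ (LinearEquiv.range _), Submodule.range_subtype]
  · set u := eP.symm v
    have hw' : eP.symm w = ⟨σ h u, hU h u u.2⟩ := by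
      rw [LinearEquiv.symm_apply_eq]
      have hu : P.projection M hPM u = v := congrArg Subtype.val (eP.apply_symm_apply v)
      refine Subtype.ext ?_
      rw [hw, Submodule.coe_projectionEquivOfDisjoint_apply, ← hu]
      exact (LinearMap.congr_fun (commute_projection hPM hP hM h).eq u).symm
    simp only [LinearMap.comp_apply, LinearEquiv.coe_coe, LinearEquiv.trans_apply, hw',
      Submodule.subtype_apply]
    exact LinearMap.congr_fun (commute_projection hPM.symm hM hP h).eq u

theorem eq_bot_or_eq_or_eq_or_eq_top_of_isCompl (hPM : IsCompl P M)
    (hP : σ.IsInvariant P) (hM : σ.IsInvariant M)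
    (hPirr : ∀ U ≤ P, σ.IsInvariant U → U = ⊥ ∨ U = P)
    (hMirr : ∀ U ≤ M, σ.IsInvariant U → U = ⊥ ∨ U = M)
    (hnoniso : ¬∃ f : P →ₗ[K] W, Function.Injective f ∧ LinearMap.range f = M ∧
      ∀ h (v w : P), (w : W) = σ h v → f w = σ h (f v))
    (hU : σ.IsInvariant U) : U = ⊥ ∨ U = P ∨ U = M ∨ U = ⊤ := by
  rcases hPirr (U ⊓ P) inf_le_right (hU.inf hP) with hUP | hUP <;>
    rcases hMirr (U ⊓ M) inf_le_right (hU.inf hM) with hUM | hUM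
  · left
    have hle_of_map_eq_bot {P' M' : Submodule K W} (hPM' : IsCompl P' M')
        (h : U.map (P'.projection M' hPM') = ⊥) : U ≤ M' := by
      rwa [← LinearMap.le_ker_iff_map, Submodule.ker_projection] at h
    rcases hPirr _ (LinearMap.map_le_range.trans (Submodule.range_projection _).le)
      (hU.map (commute_projection hPM hP hM)) with hπP | hπP
    · rw [← hUM, inf_eq_left.mpr (hle_of_map_eq_bot hPM hπP)]
    rcases hMirr _ (LinearMap.map_le_range.trans (Submodule.range_projection _).le)
      (hU.map (commute_projection hPM.symm hM hP)) with hπM | hπM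
    · rw [← hUP, inf_eq_left.mpr (hle_of_map_eq_bot hPM.symm hπM)]
    exact (hnoniso (exists_intertwining_of_disjoint hPM hP hM hU (disjoint_iff.mpr hUP)
      (disjoint_iff.mpr hUM) hπP hπM)).elim
  · right; right; left
    rw [← inf_eq_right.mpr (le_top : U ≤ ⊤), ← hPM.symm.sup_eq_top,
      sup_inf_assoc_of_le P (inf_eq_right.mp hUM), inf_comm, hUP, sup_bot_eq]
  · right; left
    rw [← inf_eq_right.mpr (le_top : U ≤ ⊤), ← hPM.sup_eq_top,
      sup_inf_assoc_of_le M (inf_eq_right.mp hUP), inf_comm, hUM, sup_bot_eq]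
  · right; right; right
    rw [eq_top_iff, ← hPM.sup_eq_top]
    exact sup_le (inf_eq_right.mp hUP) (inf_eq_right.mp hUM)

end Representation

theorem notMem_range_algebraMap_of_sq_eq {E F : Type*} [Field E] [Ring F] [Nontrivial F]
    [Algebra E F] {a : E} {b : F} (hb : b ^ 2 = algebraMap E F a) (ha : ¬∃ c : E, c ^ 2 = a) :
    b ∉ Set.range (algebraMap E F) := by
  rintro ⟨c, rfl⟩
  exact ha ⟨c, (algebraMap E F).injective (by rw [map_pow, hb])⟩

theorem TensorProduct.eq_zero_of_one_tmul_eq_tmul {E F V : Type*} [Field E] [Ring F]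
    [Algebra E F] [AddCommGroup V] [Module E V] {b : F} (hb : b ∉ Set.range (algebraMap E F))
    {v w : V} (h : (1 : F) ⊗ₜ[E] w = b ⊗ₜ[E] v) : v = 0 := by
  have hb' : b ∉ Submodule.span E {(1 : F)} := by
    rintro hspan
    obtain ⟨c, rfl⟩ := Submodule.mem_span_singleton.mp hspan
    exact hb ⟨c, Algebra.algebraMap_eq_smul_one c⟩
  obtain ⟨φ, hφb, hφ1⟩ := Submodule.exists_dual_map_eq_bot_of_notMem hb' inferInstance
  have hφ1 : φ 1 = 0 := by
    simpa [Submodule.map_span] using hφ1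
  have := congrArg (TensorProduct.lid E V ∘ φ.rTensor V) h
  simp only [Function.comp_apply, LinearMap.rTensor_tmul, TensorProduct.lid_tmul, hφ1,
    zero_smul] at this
  exact (smul_eq_zero.mp this.symm).resolve_left hφb

theorem Submodule.eq_bot_of_baseChange_le_eigenspace {E F V : Type*} [Field E] [CommRing F]
    [Algebra E F] [AddCommGroup V] [Module E V] {U : Submodule E V} (f : Module.End E V) {b : F}
    (hb : b ∉ Set.range (algebraMap E F))
    (hU : U.baseChange F ≤ Module.End.eigenspace (f.baseChange F) b) : U = ⊥ := by
  refine (Submodule.eq_bot_iff U).mpr fun v hv =>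
    TensorProduct.eq_zero_of_one_tmul_eq_tmul (w := f v) hb ?_
  have := hU (Submodule.tmul_mem_baseChange_of_mem 1 hv)
  rwa [Module.End.mem_eigenspace_iff, LinearMap.baseChange_tmul, TensorProduct.smul_tmul',
    smul_eq_mul, mul_one] at this

theorem Submodule.mapsTo_baseChange {R A M : Type*} [CommRing R] [Ring A] [Algebra R A]
    [AddCommGroup M] [Module R M] {U : Submodule R M} {f : Module.End R M}
    (hU : Set.MapsTo f U U) : Set.MapsTo (f.baseChange A) (U.baseChange A) (U.baseChange A) := by
  rintro _ ⟨y, rfl⟩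
  refine ⟨(f.restrict hU).baseChange A y, ?_⟩
  rw [← LinearMap.comp_apply, ← LinearMap.baseChange_comp, ← LinearMap.comp_apply,
    ← LinearMap.baseChange_comp]
  rfl

theorem stmt_11_general {E G V : Type*} [Field E] [CharZero E] [Group G]
    [AddCommGroup V] [Module E V]
    (ρ : Representation E G V)
    (χ : G →* Eˣ)
    (ψ : Module.End E V)
    (htw : ∀ (g : G) (v : V), ψ (ρ g v) = (χ g : E) • ρ g (ψ v))
    (α : Eˣ) (hα : ψ * ψ = (α : E) • (1 : Module.End E V))
    (hnonsq : ¬∃ c : E, c ^ 2 = (α : E))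
    (F : Type*) [Field F] [Algebra E F]
    (β : F) (hβ : β ^ 2 = algebraMap E F (α : E))
    -- the two eigenspaces of `ψ_F` on `F ⊗[E] V`
    (hirrP : ∀ U : Submodule F (F ⊗[E] V),
      U ≤ LinearMap.ker (LinearMap.baseChange F ψ - β • LinearMap.id) →
      (∀ g : G, χ g = 1 → ∀ x ∈ U, repBaseChange F ρ g x ∈ U) →
      U = ⊥ ∨ U = LinearMap.ker (LinearMap.baseChange F ψ - β • LinearMap.id))
    (hirrM : ∀ U : Submodule F (F ⊗[E] V),
      U ≤ LinearMap.ker (LinearMap.baseChange F ψ + β • LinearMap.id) →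
      (∀ g : G, χ g = 1 → ∀ x ∈ U, repBaseChange F ρ g x ∈ U) →
      U = ⊥ ∨ U = LinearMap.ker (LinearMap.baseChange F ψ + β • LinearMap.id))
    (hnoniso : ¬∃ f : (LinearMap.ker (LinearMap.baseChange F ψ - β • LinearMap.id))
        →ₗ[F] (F ⊗[E] V),
      Function.Injective f ∧
      LinearMap.range f = LinearMap.ker (LinearMap.baseChange F ψ + β • LinearMap.id) ∧
      (∀ g : G, χ g = 1 →
        ∀ v w : LinearMap.ker (LinearMap.baseChange F ψ - β • LinearMap.id),
          (w : F ⊗[E] V) = repBaseChange F ρ g (v : F ⊗[E] V) →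
          f w = repBaseChange F ρ g (f v))) :
    ∀ U : Submodule E V, (∀ g : G, χ g = 1 → ∀ v ∈ U, ρ g v ∈ U) → U = ⊥ ∨ U = ⊤ := by
  intro U hU
  have : CharZero F := charZero_of_injective_algebraMap (algebraMap E F).injective
  let σ : Representation F χ.ker (F ⊗[E] V) := (repBaseChange F ρ).comp χ.ker.subtype
  -- naming the ring lets `Commute.sub_left` unify with the `-` of `LinearMap` in `hirrP`
  let EndF := Module.End F (F ⊗[E] V)
  have hβ0 : β ≠ 0 := by
    rintro rfl
    exact α.ne_zero (by simpa using hβ.symm)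
  have hψF : ψ.baseChange F * ψ.baseChange F = β ^ 2 • 1 := by
    rw [← LinearMap.baseChange_mul, hα, LinearMap.baseChange_smul, LinearMap.baseChange_one, hβ,
      algebraMap_smul]
  have hcomm (n : χ.ker) : Commute (ψ.baseChange F) (σ n) :=
    Commute.map (show Commute ψ (ρ n) from LinearMap.ext fun v => by
      simpa [MonoidHom.mem_ker.mp n.2] using htw n v) (Module.End.baseChangeHom E F V)
  have hβcomm (n : χ.ker) : Commute (β • LinearMap.id) (σ n) := (Commute.one_left _).smul_left β
  have hkill (b : F) (hb : b ^ 2 = algebraMap E F α)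
      (hUb : U.baseChange F ≤ Module.End.eigenspace (ψ.baseChange F) b) : U = ⊥ :=
    Submodule.eq_bot_of_baseChange_le_eigenspace ψ
      (notMem_range_algebraMap_of_sq_eq hb hnonsq) hUb
  rcases Representation.eq_bot_or_eq_or_eq_or_eq_top_of_isCompl
    (Module.End.isCompl_ker_sub_smul_ker_add_smul (ψ.baseChange F) hβ0 hψF)
    (Representation.isInvariant_ker fun n => Commute.sub_left (R := EndF) (hcomm n) (hβcomm n))
    (Representation.isInvariant_ker fun n => Commute.add_left (R := EndF) (hcomm n) (hβcomm n))
    (fun W hW hWinv => hirrP W hW fun g hg => hWinv ⟨g, hg⟩)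
    (fun W hW hWinv => hirrM W hW fun g hg => hWinv ⟨g, hg⟩)
    (fun ⟨f, hinj, hrange, hf⟩ => hnoniso ⟨f, hinj, hrange, fun g hg => hf ⟨g, hg⟩⟩)
    (fun n => Submodule.mapsTo_baseChange (hU n n.2)) with h | h | h | h
  · exact .inl (Submodule.baseChange_injective (h.trans (Submodule.baseChange_bot F).symm))
  · exact .inl (hkill β hβ (h.le.trans fun x hx => by
      simpa [Module.End.mem_eigenspace_iff, sub_eq_zero] using hx))
  · exact .inl (hkill (-β) (by rw [neg_sq, hβ]) (h.le.trans fun x hx => by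
      simpa [Module.End.mem_eigenspace_iff, add_eq_zero_iff_eq_neg] using hx))
  · exact .inr (Submodule.baseChange_injective (h.trans (Submodule.baseChange_top F).symm))

/-- let `V` be a finite-dimensional irreducible representation of `G`
over a field `E` of characteristic 0, `χ : G → Eˣ` a character squaring to `1` and
taking the value `-1`, `ψ` a bijective `χ`-twisted equivariant endomorphism with
`ψ² = α·id` where `α ∈ Eˣ` is not a square in `E`, and `F = E(β)` a quadratic
extension with `β² = α`.  If the two eigenspaces of `ψ_F` on `F ⊗_E V` are irreducible
and mutually non-isomorphic as representations of `N = ker χ` over `F`, then `V` is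
irreducible as a representation of `N` over `E`. -/
theorem stmt_11 {E G V : Type*} [Field E] [CharZero E] [Group G]
    [AddCommGroup V] [Module E V] [FiniteDimensional E V]
    (ρ : Representation E G V)
    (hnontriv : Nontrivial V)
    (hirr : ∀ U : Submodule E V, (∀ g : G, ∀ v ∈ U, ρ g v ∈ U) → U = ⊥ ∨ U = ⊤)
    (χ : G →* Eˣ) (hχ : ∀ g : G, χ g * χ g = 1) (g₀ : G) (hg₀ : χ g₀ = -1)
    (ψ : Module.End E V) (hbij : Function.Bijective ψ)
    (htw : ∀ (g : G) (v : V), ψ (ρ g v) = (χ g : E) • ρ g (ψ v))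
    (α : Eˣ) (hα : ψ * ψ = (α : E) • (1 : Module.End E V))
    (hnonsq : ¬∃ c : E, c ^ 2 = (α : E))
    (F : Type*) [Field F] [Algebra E F]
    (β : F) (hβ : β ^ 2 = algebraMap E F (α : E))
    (hadj : Algebra.adjoin E {β} = ⊤)
    -- the two eigenspaces of `ψ_F` on `F ⊗[E] V`
    (hirrP : ∀ U : Submodule F (F ⊗[E] V),
      U ≤ LinearMap.ker (LinearMap.baseChange F ψ - β • LinearMap.id) →
      (∀ g : G, χ g = 1 → ∀ x ∈ U, repBaseChange F ρ g x ∈ U) →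
      U = ⊥ ∨ U = LinearMap.ker (LinearMap.baseChange F ψ - β • LinearMap.id))
    (hirrM : ∀ U : Submodule F (F ⊗[E] V),
      U ≤ LinearMap.ker (LinearMap.baseChange F ψ + β • LinearMap.id) →
      (∀ g : G, χ g = 1 → ∀ x ∈ U, repBaseChange F ρ g x ∈ U) →
      U = ⊥ ∨ U = LinearMap.ker (LinearMap.baseChange F ψ + β • LinearMap.id))
    (hPbot : LinearMap.ker (LinearMap.baseChange F ψ - β • LinearMap.id) ≠ ⊥)
    (hMbot : LinearMap.ker (LinearMap.baseChange F ψ + β • LinearMap.id) ≠ ⊥)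
    (hnoniso : ¬∃ f : (LinearMap.ker (LinearMap.baseChange F ψ - β • LinearMap.id))
        →ₗ[F] (F ⊗[E] V),
      Function.Injective f ∧
      LinearMap.range f = LinearMap.ker (LinearMap.baseChange F ψ + β • LinearMap.id) ∧
      (∀ g : G, χ g = 1 →
        ∀ v w : LinearMap.ker (LinearMap.baseChange F ψ - β • LinearMap.id),
          (w : F ⊗[E] V) = repBaseChange F ρ g (v : F ⊗[E] V) →
          f w = repBaseChange F ρ g (f v))) :
    ∀ U : Submodule E V, (∀ g : G, χ g = 1 → ∀ v ∈ U, ρ g v ∈ U) → U = ⊥ ∨ U = ⊤ :=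
  stmt_11_general ρ χ ψ htw α hα hnonsq F β hβ hirrP hirrM hnoniso
end

section
/- Let E be a field of characteristic 0, G a group, and V a finite-dimensional irreducible representation of G over E. Then there exist a finite field extension E₀/E and a finite-dimensional absolutely irreducible representation V₀ of G over E₀ together with an injective G-equivariant E-linear map V → res_{E₀/E} V₀; moreover res_{E₀/E} V₀ is isomorphic to V^{⊕m} for some integer m ≥ 1. -/
open scoped TensorProduct

universe u v w

/-- The data asserted to exist in STATEMENT 12: a finite extension `E₀/E`, a
finite-dimensional absolutely irreducible representation `V₀` of `G` over `E₀`, an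
injective `G`-equivariant `E`-linear map `V → res_{E₀/E} V₀`, and a `G`-equivariant
`E`-linear isomorphism `res_{E₀/E} V₀ ≅ V^{⊕m}` with `m ≥ 1`. -/
structure Stmt12Model (E : Type u) (G : Type v) (V : Type w) [Field E] [Group G]
    [AddCommGroup V] [Module E V] (ρ : Representation E G V) where
  E₀ : Type u
  [fieldE₀ : Field E₀]
  [algebraEE₀ : Algebra E E₀]
  finiteExt : FiniteDimensional E E₀
  V₀ : Type (max u w)
  [addCommGroupV₀ : AddCommGroup V₀]
  [moduleE₀V₀ : Module E₀ V₀]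
  [moduleEV₀ : Module E V₀]
  [towerV₀ : IsScalarTower E E₀ V₀]
  finDimV₀ : FiniteDimensional E₀ V₀
  ρ₀ : Representation E₀ G V₀
  absIrred : ∀ (F : Type (max u w)) [Field F] [Algebra E₀ F],
    IsIrredRep (repBaseChange F ρ₀)
  emb : V →ₗ[E] V₀
  embInjective : Function.Injective emb
  embEquivariant : ∀ (g : G) (v : V), emb (ρ g v) = ρ₀ g (emb v)
  m : ℕ
  m_pos : 1 ≤ m
  iso : V₀ ≃ₗ[E] (Fin m → V)
  isoEquivariant : ∀ (g : G) (v : V₀) (i : Fin m), iso (ρ₀ g v) i = ρ g (iso v i)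

/-!
Let `D` be the commutant of `ρ` in `End_E V`; by Schur's lemma it is a division algebra, finite
over `E`. Take a maximal commutative subalgebra `E₀ ⊆ D`: it is a field, finite over `E`, and
it is its own centralizer in `D`. Hence `V` is an `E₀`-vector space on which `G` acts
`E₀`-linearly and irreducibly, with commutant exactly `E₀`. By Burnside's theorem (Jacobson
density) `ρ(G)` then spans `End_{E₀} V`, a property that survives every base change `F/E₀`,
and a representation whose image spans all endomorphisms is irreducible. So `V₀ := V` over
`E₀` works, with `res_{E₀/E} V₀ = V` and `m = 1`.
-/

section Irreducibility

variable {F G M : Type*} [Field F] [Monoid G] [AddCommGroup M] [Module F M]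

theorem IsIrredRep.of_span_range_eq_top [Nontrivial M] {ρ : Representation F G M}
    (h : Submodule.span F (Set.range ρ) = ⊤) : IsIrredRep ρ := by
  refine ⟨inferInstance, fun p hp => ?_⟩
  have hinv : ∀ f : Module.End F M, ∀ x ∈ p, f x ∈ p := by
    intro f
    have hf : f ∈ Submodule.span F (Set.range ρ) := h ▸ Submodule.mem_top
    induction hf using Submodule.span_induction with
    | mem f hf => obtain ⟨g, rfl⟩ := hf; exact hp g
    | zero => simp
    | add f f' _ _ hf hf' => exact fun x hx => p.add_mem (hf x hx) (hf' x hx)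
    | smul c f _ hf => exact fun x hx => p.smul_mem c (hf x hx)
  let q : Submodule (Module.End F M) M := { p with smul_mem' := hinv }
  have hq : q.restrictScalars F = p := rfl
  -- `M` is a simple module over `End_F M`.
  rcases IsSimpleOrder.eq_bot_or_eq_top q with hq' | hq'
  · exact Or.inl (by rw [← hq, hq', Submodule.restrictScalars_bot])
  · exact Or.inr (by rw [← hq, hq', Submodule.restrictScalars_top])

theorem span_range_repBaseChange_eq_top [FiniteDimensional F M] {ρ : Representation F G M}
    (h : Submodule.span F (Set.range ρ) = ⊤) (K : Type*) [Field K] [Algebra F K] :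
    Submodule.span K (Set.range (repBaseChange K ρ)) = ⊤ := by
  have := Module.finitePresentation_of_finite F M
  -- `End_K (K ⊗ M)` is the base change of `End_F M`.
  have hbc := Module.FinitePresentation.isBaseChange_map F M M K
  refine Submodule.eq_top_iff'.mpr fun f => hbc.inductionOn f _ (Submodule.zero_mem _)
    (fun m => ?_) (fun c _ hf => Submodule.smul_mem _ c hf) (fun _ _ => Submodule.add_mem _)
  have hm : m ∈ Submodule.span F (Set.range ρ) := h ▸ Submodule.mem_top
  have := Submodule.mem_map_of_mem (f := LinearMap.baseChangeHom F K M M) hm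
  rw [Submodule.map_span, ← Set.range_comp] at this
  exact Submodule.span_le_restrictScalars F K _ this

theorem IsIrredRep.of_linearEquiv {M' : Type*} [AddCommGroup M'] [Module F M']
    {ρ : Representation F G M} {ρ' : Representation F G M'} (e : M ≃ₗ[F] M')
    (he : ∀ g v, e (ρ g v) = ρ' g (e v)) (hρ : IsIrredRep ρ) : IsIrredRep ρ' := by
  have := hρ.1
  refine ⟨e.symm.toEquiv.nontrivial, fun p hp => ?_⟩
  have hinv : ∀ g, ∀ v ∈ p.comap (e : M →ₗ[F] M'), ρ g v ∈ p.comap (e : M →ₗ[F] M') :=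
    fun g v hv => by simpa [he] using hp g _ hv
  refine (hρ.2 _ hinv).imp (fun h => ?_) (fun h => ?_) <;>
    simpa [Submodule.map_comap_eq_of_surjective e.surjective] using
      congrArg (Submodule.map (e : M →ₗ[F] M')) h

variable {ρ : Representation F G M}

theorem IsIrredRep.isSimpleModule (hρ : IsIrredRep ρ) {S : Subalgebra F (Module.End F M)}
    (hS : Set.range ρ ⊆ S) : IsSimpleModule S M := by
  have := hρ.1
  refine { eq_bot_or_eq_top := fun q => ?_ }
  have hq := hρ.2 (q.restrictScalars F) fun g x hx => q.smul_mem ⟨ρ g, hS ⟨g, rfl⟩⟩ hx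
  rwa [Submodule.restrictScalars_eq_bot_iff, Submodule.restrictScalars_eq_top_iff] at hq

theorem IsIrredRep.injective_of_mem_centralizer (hρ : IsIrredRep ρ) {z : Module.End F M}
    (hz : z ∈ Subalgebra.centralizer F (Set.range ρ)) (hz0 : z ≠ 0) : Function.Injective z := by
  rw [← LinearMap.ker_eq_bot]
  refine (hρ.2 _ fun g x hx => ?_).resolve_right (mt LinearMap.ker_eq_top.mp hz0)
  rw [LinearMap.mem_ker] at hx ⊢
  rw [← Module.End.mul_apply, ← hz _ ⟨g, rfl⟩, Module.End.mul_apply, hx, map_zero]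

theorem IsIrredRep.isDomain_of_le_centralizer (hρ : IsIrredRep ρ)
    {K : Subalgebra F (Module.End F M)} (hK : K ≤ Subalgebra.centralizer F (Set.range ρ)) :
    IsDomain K := by
  have := hρ.1
  have : NoZeroDivisors K := ⟨fun {a b} hab => or_iff_not_imp_left.mpr fun ha => by
    have ha' : (a : Module.End F M) ≠ 0 := by simpa using ha
    ext m
    exact hρ.injective_of_mem_centralizer (hK a.2) ha' (by
      simpa using LinearMap.congr_fun (congrArg Subtype.val hab) m)⟩
  exact NoZeroDivisors.to_isDomain K

theorem IsIrredRep.span_range_eq_top_of_centralizer_eq_bot [FiniteDimensional F M]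
    (hρ : IsIrredRep ρ) (hc : Subalgebra.centralizer F (Set.range ρ) = ⊥) :
    Submodule.span F (Set.range ρ) = ⊤ := by
  set S := Algebra.adjoin F (Set.range ρ)
  have := hρ.isSimpleModule (S := S) Algebra.subset_adjoin
  have hscalar : ∀ ψ : M →ₗ[S] M, ∃ c : F, ∀ m, ψ m = c • m := by
    intro ψ
    have hψ : ψ.restrictScalars F ∈ Subalgebra.centralizer F (Set.range ρ) := by
      rintro _ ⟨g, rfl⟩
      exact LinearMap.ext fun m => (ψ.map_smul ⟨ρ g, Algebra.subset_adjoin ⟨g, rfl⟩⟩ m).symm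
    rw [hc, Algebra.mem_bot] at hψ
    obtain ⟨c, hc⟩ := hψ
    exact ⟨c, fun m => (LinearMap.congr_fun hc m).symm⟩
  have := Module.Finite.of_restrictScalars_finite F (Module.End S M) M
  have hS : S = ⊤ := by
    refine eq_top_iff.mpr fun f _ => ?_
    let f' : M →ₗ[Module.End S M] M :=
      { f.toAddMonoidHom with
        map_smul' := fun ψ m => by
          obtain ⟨c, hψ⟩ := hscalar ψ
          simp [Module.End.smul_def, hψ] }
    -- Jacobson density: `f` commutes with `End_S M`, which consists of scalars.
    obtain ⟨s, hs⟩ := Module.Finite.toModuleEnd_moduleEnd_surjective (R := S) (M := M) f'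
    convert s.2
    exact LinearMap.ext fun m => (LinearMap.congr_fun hs m).symm
  have := congrArg Subalgebra.toSubmodule hS
  rwa [Algebra.adjoin_eq_span, ← MonoidHom.coe_mrange, Submonoid.closure_eq,
    Algebra.top_toSubmodule, MonoidHom.coe_mrange] at this

end Irreducibility

-- The equation says that `K` is a maximal commutative subalgebra of `D`.
theorem Subalgebra.exists_inf_centralizer_eq {R A : Type*} [CommRing R] [Ring A] [Algebra R A]
    [IsNoetherian R A] (D : Subalgebra R A) :
    ∃ K : Subalgebra R A, D ⊓ Subalgebra.centralizer R K = K := by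
  have : WellFoundedGT (Subalgebra R A) :=
    RelHomClass.isWellFounded (⟨Subalgebra.toSubmodule, @fun _ _ h ↦ h⟩ : _ →r (· > ·))
  obtain ⟨K, hK, hKmax⟩ := exists_maximal_of_wellFoundedGT
    (fun K : Subalgebra R A => K ≤ D ⊓ Subalgebra.centralizer R K) ⟨⊥, bot_le⟩
  refine ⟨K, le_antisymm (fun x ⟨hxD, hxK⟩ => ?_) hK⟩
  have hcomm : ∀ y ∈ insert x (K : Set A), ∀ z ∈ insert x (K : Set A), y * z = z * y := by
    rintro y (rfl | hy) z (rfl | hz)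
    · rfl
    · exact (hxK z hz).symm
    · exact hxK y hy
    · exact (hK hz).2 y hy
  have := Algebra.isMulCommutative_adjoin R hcomm
  have hK' : Algebra.adjoin R (insert x (K : Set A)) ≤
      D ⊓ Subalgebra.centralizer R (Algebra.adjoin R (insert x (K : Set A))) :=
    fun y hy => ⟨Algebra.adjoin_le (Set.insert_subset hxD fun y hy => (hK hy).1) hy,
      fun z hz => setLike_mul_comm hz hy⟩
  exact hKmax hK' (fun y hy => Algebra.subset_adjoin (Or.inr hy))
    (Algebra.subset_adjoin (Set.mem_insert x _))

namespace Representation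

variable {E L G V : Type*} [CommSemiring E] [CommSemiring L] [Monoid G] [AddCommMonoid V]
  [Module E V] [Module L V]

def liftScalars (ρ : Representation E G V) (h : ∀ g (c : L) v, ρ g (c • v) = c • ρ g v) :
    Representation L G V where
  toFun g := { toFun := ρ g, map_add' := map_add (ρ g), map_smul' := h g }
  map_one' := LinearMap.ext fun v => by simp
  map_mul' g g' := LinearMap.ext fun v => by simp [Module.End.mul_apply]

end Representation

theorem IsIrredRep.liftScalars {E L G V : Type*} [Field E] [Field L] [Algebra E L] [Monoid G]
    [AddCommGroup V] [Module E V] [Module L V] [IsScalarTower E L V] {ρ : Representation E G V}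
    (hρ : IsIrredRep ρ) (h : ∀ g (c : L) v, ρ g (c • v) = c • ρ g v) :
    IsIrredRep (ρ.liftScalars h) :=
  ⟨hρ.1, fun p hp => by
    simpa only [Submodule.restrictScalars_eq_bot_iff, Submodule.restrictScalars_eq_top_iff]
      using hρ.2 (p.restrictScalars E) hp⟩

open scoped IsMulCommutative in
theorem exists_field_span_range_eq_top {E : Type u} {G V : Type*} [Field E] [Monoid G]
    [AddCommGroup V] [Module E V] [FiniteDimensional E V] {ρ : Representation E G V}
    (hρ : IsIrredRep ρ) :
    ∃ (L : Type u) (_ : Field L) (_ : Algebra E L) (_ : Module L V) (_ : IsScalarTower E L V)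
      (ρ₀ : Representation L G V), FiniteDimensional E L ∧ (∀ g v, ρ₀ g v = ρ g v) ∧
      Submodule.span L (Set.range ρ₀) = ⊤ := by
  set D := Subalgebra.centralizer E (Set.range ρ)
  obtain ⟨K, hK⟩ := D.exists_inf_centralizer_eq
  have hKD : K ≤ D := hK.ge.trans inf_le_left
  have : IsMulCommutative K := .of_setLike_mul_comm fun x hx y hy =>
    hK.ge.trans inf_le_right hy x hx
  have := hρ.isDomain_of_le_centralizer hKD
  let : Field K := fieldOfFiniteDimensional E K
  have : Small.{u} K := Module.Finite.small E K
  -- `K` lives in `End_E V`; `Shrink` moves it down to the universe of `E`.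
  let ψ : Shrink.{u} K ≃ₐ[E] K := Shrink.algEquiv E K
  let : Module (Shrink.{u} K) V := Module.compHom V (K.val.comp ψ.toAlgHom).toRingHom
  have hsmul : ∀ (c : Shrink.{u} K) (v : V), c • v = (ψ c : Module.End E V) v := fun _ _ => rfl
  have : IsScalarTower E (Shrink.{u} K) V := ⟨fun a c v => by simp [hsmul]⟩
  have hlin : ∀ g (c : Shrink.{u} K) v, ρ g (c • v) = c • ρ g v := fun g c v => by
    simpa [hsmul] using (LinearMap.congr_fun (hKD (ψ c).2 (ρ g) ⟨g, rfl⟩) v)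
  have : FiniteDimensional (Shrink.{u} K) V := .right E _ V
  refine ⟨Shrink.{u} K, inferInstance, inferInstance, inferInstance, inferInstance,
    ρ.liftScalars hlin, .equiv ψ.toLinearEquiv.symm, fun _ _ => rfl,
    (hρ.liftScalars hlin).span_range_eq_top_of_centralizer_eq_bot ?_⟩
  refine eq_bot_iff.mpr fun φ hφ => ?_
  have hφK : φ.restrictScalars E ∈ K := by
    refine hK.le ⟨?_, fun k hk => LinearMap.ext fun v => ?_⟩
    · rintro _ ⟨g, rfl⟩
      exact LinearMap.ext fun v => LinearMap.congr_fun (hφ _ ⟨g, rfl⟩) v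
    · simpa [hsmul] using (φ.map_smul (ψ.symm ⟨k, hk⟩) v).symm
  refine Algebra.mem_bot.mpr ⟨ψ.symm ⟨_, hφK⟩, LinearMap.ext fun v => ?_⟩
  simp [hsmul]

theorem stmt_12_general {E : Type u} {G : Type v} {V : Type w} [Field E] [Group G]
    [AddCommGroup V] [Module E V] [FiniteDimensional E V]
    (ρ : Representation E G V)
    (hnontriv : Nontrivial V)
    (hirr : ∀ W : Submodule E V, (∀ g : G, ∀ v ∈ W, ρ g v ∈ W) → W = ⊥ ∨ W = ⊤) :
    Nonempty (Stmt12Model E G V ρ) := by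
  -- `V₀` has to live in `Type (max u w)`.
  let e : V ≃ₗ[E] ULift.{u} V := ULift.moduleEquiv.symm
  let ρ' : Representation E G (ULift.{u} V) := (e.conjAlgEquiv E).toMonoidHom.comp ρ
  have he : ∀ g v, e (ρ g v) = ρ' g (e v) := fun g v => by simp [ρ']
  obtain ⟨E₀, _, _, _, _, ρ₀, hfin, hρ₀, hspan⟩ :=
    exists_field_span_range_eq_top (IsIrredRep.of_linearEquiv e he ⟨hnontriv, hirr⟩)
  have : FiniteDimensional E₀ (ULift.{u} V) := .right E E₀ _
  exact ⟨{ E₀, V₀ := ULift.{u} V, ρ₀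
           finiteExt := hfin
           finDimV₀ := inferInstance
           absIrred := fun F _ _ =>
             IsIrredRep.of_span_range_eq_top (span_range_repBaseChange_eq_top hspan F)
           emb := e
           embInjective := e.injective
           embEquivariant := fun g v => (he g v).trans (hρ₀ g (e v)).symm
           m := 1
           m_pos := le_rfl
           iso := e.symm.trans (LinearEquiv.funUnique (Fin 1) E V).symm
           isoEquivariant := fun g v i => by simp [hρ₀, ρ'] }⟩

/-- every finite-dimensional irreducible representation of a group `G`
over a field `E` of characteristic 0 embeds `G`-equivariantly into the restriction of
scalars of a finite-dimensional absolutely irreducible representation `V₀` over a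
finite extension `E₀/E`, and that restriction of scalars is isomorphic to `V^{⊕m}`
for some `m ≥ 1`. -/
theorem stmt_12 {E : Type u} {G : Type v} {V : Type w} [Field E] [CharZero E] [Group G]
    [AddCommGroup V] [Module E V] [FiniteDimensional E V]
    (ρ : Representation E G V)
    (hnontriv : Nontrivial V)
    (hirr : ∀ W : Submodule E V, (∀ g : G, ∀ v ∈ W, ρ g v ∈ W) → W = ⊥ ∨ W = ⊤) :
    Nonempty (Stmt12Model E G V ρ) :=
  stmt_12_general ρ hnontriv hirr
end

section
/- Let E be a subfield of ℂ, G a group, V a nonzero finite-dimensional representation of G over E, and χ: G → Eˣ a group homomorphism with χ(g)² = 1 for all g ∈ G. Assume there exists a bijective χ-twisted equivariant E-linear map ψ₀: V → V. Let π be a ℂ-vector space with a ℂ-linear action of G such that every G-equivariant ℂ-linear endomorphism of π is multiplication by a scalar in ℂ. Let ι, ι': V → π be E-linear maps whose ℂ-linear extensions ℂ ⊗_E V → π are bijective, and suppose that ι(g·v) = g·ι(v) and ι'(g·v) = χ(g)·(g·ι'(v)) for all g ∈ G and v ∈ V. Then there exists c ∈ ℂˣ such that c·ι(V) = ι'(V)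 as E-subspaces of π, and c is unique up to multiplication by an element of Eˣ. -/
/-!
The twisted map `ψ₀` turns `ι'` into the genuinely equivariant embedding `ι' ∘ ψ₀` (the two
twists by `χ` cancel since `χ² = 1`). Transported through the isomorphism `ℂ ⊗_E V ≅ π` given
by `ι`, it becomes a `G`-equivariant endomorphism of `π`, hence a scalar `c`, and
`c • ι = ι' ∘ ψ₀` has the same image as `ι'`. If also `c' • ι(V) = ι'(V)`, then
`ι w = (c'/c) • ι v` for some `v ≠ 0`, i.e. `1 ⊗ w = (c'/c) • (1 ⊗ v)` in `ℂ ⊗_E V`; a linear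
form on `V` with `f v = 1`, extended to `ℂ ⊗_E V → ℂ`, shows `c'/c = f w ∈ E`.
-/

open scoped TensorProduct

open Function

namespace LinearMap

section CommSemiring

variable {R A V W N π : Type*} [CommSemiring R] [CommSemiring A] [Algebra R A]
  [AddCommMonoid V] [Module R V] [AddCommMonoid W] [Module R W]
  [AddCommMonoid N] [Module A N] [Module R N] [IsScalarTower R A N]
  [AddCommMonoid π] [Module A π] [Module R π] [IsScalarTower R A π]

theorem liftBaseChange_comp_baseChange (f : W →ₗ[R] π) (a : V →ₗ[R] W) (g : V →ₗ[R] N)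
    (b : N →ₗ[A] π) (h : ∀ v, f (a v) = b (g v)) :
    f.liftBaseChange A ∘ₗ a.baseChange A = b ∘ₗ g.liftBaseChange A := by
  ext v
  simp [h]

end CommSemiring

theorem injective_of_injective_liftBaseChange {R A V π : Type*} [CommRing R] [CommRing A]
    [Algebra R A] [FaithfulSMul R A] [AddCommGroup V] [Module R V] [Module.Flat R V]
    [AddCommGroup π] [Module A π] [Module R π] [IsScalarTower R A π] {ι : V →ₗ[R] π}
    (hι : Injective (ι.liftBaseChange A)) : Injective ι := by
  have : ⇑ι = ι.liftBaseChange A ∘ TensorProduct.mk R A V 1 := by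
    funext v
    simp
  rw [this]
  exact hι.comp (Module.Flat.tensorProduct_mk_injective R V A)

section Field

variable {E A V π : Type*} [Field E] [CommSemiring A] [Algebra E A]
  [AddCommGroup V] [Module E V] [AddCommMonoid π] [Module A π] [Module E π]
  [IsScalarTower E A π] {ι : V →ₗ[E] π}

theorem exists_algebraMap_eq_of_apply_eq_smul (hι : Injective (ι.liftBaseChange A)) {v w : V}
    (hv : v ≠ 0) {d : A} (h : ι w = d • ι v) : ∃ e : E, algebraMap E A e = d := by
  have htmul : (1 : A) ⊗ₜ[E] w = d • ((1 : A) ⊗ₜ[E] v) := hι (by simp [h])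
  obtain ⟨f, hf⟩ := Module.Projective.exists_dual_eq_one E hv
  exact ⟨f w, by simpa [hf] using congrArg ((Algebra.linearMap E A ∘ₗ f).liftBaseChange A) htmul⟩

theorem exists_units_eq_mul_of_range_smul_eq [Nontrivial A] [Nontrivial V]
    (hι : Injective (ι.liftBaseChange A)) {c c' : Aˣ}
    (h : Set.range (fun v => (c' : A) • ι v) = Set.range (fun v => (c : A) • ι v)) :
    ∃ e : Eˣ, (c' : A) = algebraMap E A e * c := by
  obtain ⟨v, hv⟩ := exists_ne (0 : V)
  obtain ⟨w, hw⟩ : (c' : A) • ι v ∈ Set.range (fun v => (c : A) • ι v) := h ▸ ⟨v, rfl⟩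
  have hw' : ι w = (↑c⁻¹ * c' : A) • ι v := by
    rw [mul_smul, ← hw, smul_smul, Units.inv_mul, one_smul]
  obtain ⟨e, he⟩ := exists_algebraMap_eq_of_apply_eq_smul hι hv hw'
  have he0 : e ≠ 0 := by
    rintro rfl
    simpa using he.symm
  refine ⟨Units.mk0 e he0, ?_⟩
  rw [Units.val_mk0, he, mul_right_comm, Units.inv_mul, one_mul]

end Field

end LinearMap

theorem exists_forall_eq_smul_of_equivariant {R A G V π : Type*} [CommSemiring R]
    [CommSemiring A] [Algebra R A] [Group G] [AddCommMonoid V] [Module R V]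
    [AddCommMonoid π] [Module A π] [Module R π] [IsScalarTower R A π]
    (ρ : Representation R G V) (ρπ : Representation A G π)
    (hSchur : ∀ f : Module.End A π, (∀ (g : G) (x : π), f (ρπ g x) = ρπ g (f x)) →
      ∃ c : A, f = c • (1 : Module.End A π))
    {ι φ : V →ₗ[R] π} (hι : Bijective (ι.liftBaseChange A))
    (hιeq : ∀ (g : G) (v : V), ι (ρ g v) = ρπ g (ι v))
    (hφeq : ∀ (g : G) (v : V), φ (ρ g v) = ρπ g (φ v)) :
    ∃ c : A, ∀ v, φ v = c • ι v := by
  let L := LinearEquiv.ofBijective (ι.liftBaseChange A) hι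
  let F : Module.End A π := φ.liftBaseChange A ∘ₗ L.symm.toLinearMap
  have hFL : ∀ y, F (ι.liftBaseChange A y) = φ.liftBaseChange A y := fun y =>
    congrArg (φ.liftBaseChange A) (L.symm_apply_apply y)
  have hFcomm : ∀ (g : G) (x : π), F (ρπ g x) = ρπ g (F x) := by
    intro g x
    obtain ⟨y, rfl⟩ := hι.surjective x
    have hιg := congr($(LinearMap.liftBaseChange_comp_baseChange ι (ρ g) ι (ρπ g) (hιeq g)) y)
    have hφg := congr($(LinearMap.liftBaseChange_comp_baseChange φ (ρ g) φ (ρπ g) (hφeq g)) y)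
    simp only [LinearMap.comp_apply] at hιg hφg
    rw [← hιg, hFL, hFL, hφg]
  obtain ⟨c, hc⟩ := hSchur F hFcomm
  exact ⟨c, fun v => by simpa [hc] using (hFL (1 ⊗ₜ v)).symm⟩

theorem stmt_13_general {E G V π : Type*} [Field E] [Algebra E ℂ] [Group G]
    [AddCommGroup V] [Module E V] [Nontrivial V]
    (ρ : Representation E G V)
    (χ : G →* Eˣ) (hχ : ∀ g : G, χ g * χ g = 1)
    (hψ₀ : ∃ ψ₀ : Module.End E V, Function.Bijective ψ₀ ∧
      ∀ (g : G) (v : V), ψ₀ (ρ g v) = (χ g : E) • ρ g (ψ₀ v))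
    [AddCommGroup π] [Module ℂ π] [Module E π] [IsScalarTower E ℂ π]
    (ρπ : Representation ℂ G π)
    (hSchur : ∀ f : Module.End ℂ π, (∀ (g : G) (x : π), f (ρπ g x) = ρπ g (f x)) →
      ∃ c : ℂ, f = c • (1 : Module.End ℂ π))
    (ι ι' : V →ₗ[E] π)
    (hι : Function.Bijective (LinearMap.liftBaseChange ℂ ι))
    (hι' : Function.Bijective (LinearMap.liftBaseChange ℂ ι'))
    (hιeq : ∀ (g : G) (v : V), ι (ρ g v) = ρπ g (ι v))
    (hι'eq : ∀ (g : G) (v : V), ι' (ρ g v) = (χ g : E) • ρπ g (ι' v)) :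
    ∃ c : ℂˣ, (Set.range fun v : V => (c : ℂ) • ι v) = Set.range ι' ∧
      ∀ c' : ℂˣ, (Set.range fun v : V => (c' : ℂ) • ι v) = Set.range ι' →
        ∃ e : Eˣ, (c' : ℂ) = algebraMap E ℂ (e : E) * (c : ℂ) := by
  obtain ⟨ψ₀, hψ₀bij, hψ₀eq⟩ := hψ₀
  have hι'ψ₀eq : ∀ (g : G) (v : V), ι' (ψ₀ (ρ g v)) = ρπ g (ι' (ψ₀ v)) := by
    intro g v
    have hχg : (χ g : E) * χ g = 1 := by simpa using Units.ext_iff.mp (hχ g)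
    rw [hψ₀eq, map_smul, hι'eq, smul_smul, hχg, one_smul]
  obtain ⟨c, hc⟩ :=
    exists_forall_eq_smul_of_equivariant ρ ρπ hSchur (φ := ι' ∘ₗ ψ₀) hι hιeq hι'ψ₀eq
  have hrange : Set.range (fun v => c • ι v) = Set.range ι' := by
    rw [← hψ₀bij.surjective.range_comp ι']
    exact congrArg Set.range (funext fun v => (hc v).symm)
  have hc0 : c ≠ 0 := by
    rintro rfl
    obtain ⟨v, hv⟩ := exists_ne (0 : V)
    refine hv (hψ₀bij.injective ?_)
    refine LinearMap.injective_of_injective_liftBaseChange hι'.injective ?_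
    simpa using hc v
  exact ⟨Units.mk0 c hc0, hrange, fun c' hc' =>
    LinearMap.exists_units_eq_mul_of_range_smul_eq hι.injective (hc'.trans hrange.symm)⟩

/-- comparison of two `E`-rational structures on an irreducible complex
module.  If `ι` is equivariant and `ι'` is `χ`-twisted equivariant, both with bijective
`ℂ`-linear extensions, a bijective `χ`-twisted equivariant self-map `ψ₀` of `V` exists,
and endomorphisms of `π` commuting with `G` are scalars, then `ι'(V) = c·ι(V)` for
some `c ∈ ℂˣ`, unique up to multiplication by `Eˣ`. -/
theorem stmt_13 {E G V π : Type*} [Field E] [Algebra E ℂ] [Group G]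
    [AddCommGroup V] [Module E V] [Nontrivial V] [FiniteDimensional E V]
    (ρ : Representation E G V)
    (χ : G →* Eˣ) (hχ : ∀ g : G, χ g * χ g = 1)
    (hψ₀ : ∃ ψ₀ : Module.End E V, Function.Bijective ψ₀ ∧
      ∀ (g : G) (v : V), ψ₀ (ρ g v) = (χ g : E) • ρ g (ψ₀ v))
    [AddCommGroup π] [Module ℂ π] [Module E π] [IsScalarTower E ℂ π]
    (ρπ : Representation ℂ G π)
    (hSchur : ∀ f : Module.End ℂ π, (∀ (g : G) (x : π), f (ρπ g x) = ρπ g (f x)) →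
      ∃ c : ℂ, f = c • (1 : Module.End ℂ π))
    (ι ι' : V →ₗ[E] π)
    (hι : Function.Bijective (LinearMap.liftBaseChange ℂ ι))
    (hι' : Function.Bijective (LinearMap.liftBaseChange ℂ ι'))
    (hιeq : ∀ (g : G) (v : V), ι (ρ g v) = ρπ g (ι v))
    (hι'eq : ∀ (g : G) (v : V), ι' (ρ g v) = (χ g : E) • ρπ g (ι' v)) :
    ∃ c : ℂˣ, (Set.range fun v : V => (c : ℂ) • ι v) = Set.range ι' ∧
      ∀ c' : ℂˣ, (Set.range fun v : V => (c' : ℂ) • ι v) = Set.range ι' →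
        ∃ e : Eˣ, (c' : ℂ) = algebraMap E ℂ (e : E) * (c : ℂ) :=
  stmt_13_general ρ χ hχ hψ₀ ρπ hSchur ι ι' hι hι' hιeq hι'eq
end

section
/- Let E be a subfield of ℂ, G a group, and χ: G → Eˣ a group homomorphism with χ(g)² = 1 for all g ∈ G. Let V be a nonzero finite-dimensional representation of G over E and ψ: V → V a bijective χ-twisted equivariant E-linear map with ψ ∘ ψ = α · id_V for some α ∈ Eˣ; fix a square root √α ∈ ℂˣ of α and let P₊ and P₋ be the eigenspaces of the ℂ-linear extension ψ_ℂ of ψ on ℂ ⊗_E V for the eigenvalues √α and −√α, so that ℂ ⊗_E V = P₊ ⊕ P₋. Let π be a ℂ-vector space with a ℂ-linear action of G such that every G-equivariant ℂ-linear endomorphism of π is multiplication by a scalar, and let ι, ι': V → π be E-linear maps whose ℂ-linear extensions ι_ℂ, ι'_ℂ: ℂ ⊗_E V → π are bijective and which satisfy ι(g·v) = g·ι(v) and ι'(g·v) = χ(g)·(g·ι'(v)) for all g ∈ G and v ∈ V. Finally, let Λ, Λ': π → ℂ be ℂ-linear functionals such that Λ ∘ ι' ≠ 0, such that Λ and Λ'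 agree on the subspace ι'_ℂ(P₊) and satisfy Λ = −Λ' on the subspace ι'_ℂ(P₋), and such that for some ω ∈ ℂˣ both Λ(ι(V)) ⊆ ω·E and Λ'(ι'(V)) ⊆ ω·E. Then ι'(V) = √α · ι(V) as E-subspaces of π. -/
open scoped TensorProduct

/-- the linear-algebraic core of the archimedean period relation.  With
`ψ` a bijective `χ`-twisted equivariant endomorphism of the `E`-rational model `V`
satisfying `ψ² = α·id`, `√α` a fixed complex square root of `α`, `P₊, P₋` the
eigenspaces of `ψ_ℂ` on `ℂ ⊗_E V` (which decompose it), `ι` equivariant, `ι'`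
`χ`-twisted equivariant, both with bijective complex extensions into an irreducible
complex module `π`, and functionals `Λ, Λ'` with `Λ∘ι' ≠ 0` which agree on `ι'_ℂ(P₊)`,
are negatives of each other on `ι'_ℂ(P₋)`, and take values in a common line `ω·E` on
the respective rational models, one has the period relation `ι'(V) = √α·ι(V)`. -/
theorem stmt_14 {E G V π : Type*} [Field E] [Algebra E ℂ] [Group G]
    [AddCommGroup V] [Module E V] [Nontrivial V] [FiniteDimensional E V]
    (ρ : Representation E G V)
    (χ : G →* Eˣ) (hχ : ∀ g : G, χ g * χ g = 1)
    (ψ : Module.End E V) (hbij : Function.Bijective ψ)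
    (htw : ∀ (g : G) (v : V), ψ (ρ g v) = (χ g : E) • ρ g (ψ v))
    (α : Eˣ) (hα : ψ * ψ = (α : E) • (1 : Module.End E V))
    (sqrtα : ℂˣ) (hsqrtα : (sqrtα : ℂ) ^ 2 = algebraMap E ℂ (α : E))
    (hcompl : IsCompl
      (LinearMap.ker (LinearMap.baseChange ℂ ψ - (sqrtα : ℂ) • LinearMap.id))
      (LinearMap.ker (LinearMap.baseChange ℂ ψ + (sqrtα : ℂ) • LinearMap.id)))
    [AddCommGroup π] [Module ℂ π] [Module E π] [IsScalarTower E ℂ π]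
    (ρπ : Representation ℂ G π)
    (hSchur : ∀ f : Module.End ℂ π, (∀ (g : G) (x : π), f (ρπ g x) = ρπ g (f x)) →
      ∃ c : ℂ, f = c • (1 : Module.End ℂ π))
    (ι ι' : V →ₗ[E] π)
    (hι : Function.Bijective (LinearMap.liftBaseChange ℂ ι))
    (hι' : Function.Bijective (LinearMap.liftBaseChange ℂ ι'))
    (hιeq : ∀ (g : G) (v : V), ι (ρ g v) = ρπ g (ι v))
    (hι'eq : ∀ (g : G) (v : V), ι' (ρ g v) = (χ g : E) • ρπ g (ι' v))
    (Λ Λ' : π →ₗ[ℂ] ℂ)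
    (hΛne : ∃ v : V, Λ (ι' v) ≠ 0)
    (hplus : ∀ x ∈ LinearMap.ker (LinearMap.baseChange ℂ ψ - (sqrtα : ℂ) • LinearMap.id),
      Λ (LinearMap.liftBaseChange ℂ ι' x) = Λ' (LinearMap.liftBaseChange ℂ ι' x))
    (hminus : ∀ x ∈ LinearMap.ker (LinearMap.baseChange ℂ ψ + (sqrtα : ℂ) • LinearMap.id),
      Λ (LinearMap.liftBaseChange ℂ ι' x) = -Λ' (LinearMap.liftBaseChange ℂ ι' x))
    (hω : ∃ ω : ℂˣ,
      (∀ v : V, ∃ e : E, Λ (ι v) = (ω : ℂ) * algebraMap E ℂ e) ∧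
      (∀ v : V, ∃ e : E, Λ' (ι' v) = (ω : ℂ) * algebraMap E ℂ e)) :
    Set.range ι' = Set.range fun v : V => (sqrtα : ℂ) • ι v := by
  classical
  set ιℂ := LinearMap.liftBaseChange ℂ ι with hιℂ
  set ι'ℂ := LinearMap.liftBaseChange ℂ ι' with hι'ℂ
  set ψℂ := LinearMap.baseChange ℂ ψ with hψℂ
  set s : ℂ := (sqrtα : ℂ) with hs
  set A : ℂ := algebraMap E ℂ (α : E) with hA
  have hAne : A ≠ 0 := by
    simp [hA, map_eq_zero]
  have hsne : s ≠ 0 := sqrtα.ne_zero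
  -- ψℂ squares to A
  have hψ2 : ∀ y : ℂ ⊗[E] V, ψℂ (ψℂ y) = A • y := by
    intro y
    induction y using TensorProduct.induction_on with
    | zero => simp
    | tmul z v =>
      have : ψ (ψ v) = (α : E) • v := by
        have := congrArg (fun f : Module.End E V => f v) hα
        simpa [Module.End.mul_apply] using this
      simp only [hψℂ, LinearMap.baseChange_tmul, this, TensorProduct.tmul_smul]
      rw [hA, algebraMap_smul]
    | add a b ha hb => simp [map_add, ha, hb, smul_add]
  -- ψℂ on pure 1 ⊗ v
  have hψ1 : ∀ v : V, ψℂ (1 ⊗ₜ[E] v) = 1 ⊗ₜ[E] ψ v := fun v => rfl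
  have hι1 : ∀ v : V, ιℂ (1 ⊗ₜ[E] v) = ι v := fun v => by
    simp [hιℂ, LinearMap.liftBaseChange_tmul]
  have hι'1 : ∀ v : V, ι'ℂ (1 ⊗ₜ[E] v) = ι' v := fun v => by
    simp [hι'ℂ, LinearMap.liftBaseChange_tmul]
  -- equivariance of the complexified maps
  have hιc : ∀ (g : G) (y : ℂ ⊗[E] V),
      ιℂ (LinearMap.baseChange ℂ (ρ g) y) = ρπ g (ιℂ y) := by
    intro g y
    induction y using TensorProduct.induction_on with
    | zero => simp
    | tmul z v =>
      simp [hιℂ, LinearMap.baseChange_tmul, LinearMap.liftBaseChange_tmul, hιeq g v,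
        map_smul]
    | add a b ha hb => simp [map_add, ha, hb]
  have hι'c : ∀ (g : G) (y : ℂ ⊗[E] V),
      ι'ℂ (LinearMap.baseChange ℂ (ρ g) y) =
        algebraMap E ℂ ((χ g : E)) • ρπ g (ι'ℂ y) := by
    intro g y
    induction y using TensorProduct.induction_on with
    | zero => simp
    | tmul z v =>
      simp only [hι'ℂ, LinearMap.baseChange_tmul, LinearMap.liftBaseChange_tmul,
        hι'eq g v, map_smul]
      rw [smul_comm, algebraMap_smul]
    | add a b ha hb => simp [map_add, ha, hb, smul_add]
  have hψc : ∀ (g : G) (y : ℂ ⊗[E] V),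
      ψℂ (LinearMap.baseChange ℂ (ρ g) y) =
        algebraMap E ℂ ((χ g : E)) • LinearMap.baseChange ℂ (ρ g) (ψℂ y) := by
    intro g y
    induction y using TensorProduct.induction_on with
    | zero => simp
    | tmul z v =>
      simp only [hψℂ, LinearMap.baseChange_tmul, htw g v, TensorProduct.tmul_smul]
      rw [algebraMap_smul]
    | add a b ha hb => simp [map_add, ha, hb, smul_add]
  -- Schur's lemma applied to ι'ℂ ∘ ψℂ ∘ ιℂ⁻¹
  have hE : ∀ (t : E) (p : π), t • p = algebraMap E ℂ t • p :=
    fun t p => (algebraMap_smul ℂ t p).symm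
  let e1 : (ℂ ⊗[E] V) ≃ₗ[ℂ] π := LinearEquiv.ofBijective ιℂ hι
  have he1 : ∀ y, e1 y = ιℂ y := fun _ => rfl
  obtain ⟨c, hc⟩ := hSchur ((ι'ℂ ∘ₗ ψℂ) ∘ₗ (e1.symm : π →ₗ[ℂ] ℂ ⊗[E] V)) (by
    intro g x
    have h1 : e1.symm (ρπ g x) = LinearMap.baseChange ℂ (ρ g) (e1.symm x) := by
      apply e1.injective
      rw [LinearEquiv.apply_symm_apply, he1, hιc, ← he1, LinearEquiv.apply_symm_apply]
    simp only [LinearMap.comp_apply, LinearEquiv.coe_coe]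
    rw [h1, hψc, map_smul, hι'c, smul_smul, ← map_mul, ← Units.val_mul, hχ g]
    simp)
  have key : ∀ y : ℂ ⊗[E] V, ι'ℂ (ψℂ y) = c • ιℂ y := by
    intro y
    have h2 := congrArg (fun f : Module.End ℂ π => f (ιℂ y)) hc
    simp only [LinearMap.comp_apply, LinearEquiv.coe_coe, LinearMap.smul_apply,
      Module.End.one_apply] at h2
    have hsy : e1.symm (ιℂ y) = y := by
      apply e1.injective
      rw [LinearEquiv.apply_symm_apply, he1]
    rw [hsy] at h2
    exact h2
  -- consequence: A • ι' v = c • ι (ψ v)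
  have key2 : ∀ v : V, A • ι' v = c • ι (ψ v) := by
    intro v
    have := key (ψℂ (1 ⊗ₜ[E] v))
    rw [hψ2, map_smul, hψ1, hι'1, hι1] at this
    exact this
  -- relation (I): Λ (ι' (ψ v)) = s * Λ' (ι' v)
  have relI : ∀ v : V, Λ (ι' (ψ v)) = s * Λ' (ι' v) := by
    intro v
    have hmem : (1 ⊗ₜ[E] v : ℂ ⊗[E] V) ∈
        (LinearMap.ker (ψℂ - s • LinearMap.id)) ⊔
        (LinearMap.ker (ψℂ + s • LinearMap.id)) := by
      rw [hcompl.sup_eq_top]; trivial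
    obtain ⟨p, hp, m, hm, hpm⟩ := Submodule.mem_sup.mp hmem
    have hpψ : ψℂ p = s • p := by
      have := LinearMap.mem_ker.mp hp
      simp only [LinearMap.sub_apply, LinearMap.smul_apply, LinearMap.id_apply,
        sub_eq_zero] at this
      exact this
    have hmψ : ψℂ m = -(s • m) := by
      have := LinearMap.mem_ker.mp hm
      simp only [LinearMap.add_apply, LinearMap.smul_apply, LinearMap.id_apply,
        add_eq_zero_iff_eq_neg] at this
      exact this
    have h1 : Λ (ι'ℂ p) = Λ' (ι'ℂ p) := hplus p hp
    have h2 : Λ (ι'ℂ m) = -Λ' (ι'ℂ m) := hminus m hm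
    have lhs : ι' (ψ v) = ι'ℂ (ψℂ (1 ⊗ₜ[E] v)) := by rw [hψ1, hι'1]
    have rhs : ι' v = ι'ℂ (1 ⊗ₜ[E] v) := (hι'1 v).symm
    rw [lhs, rhs, ← hpm]
    simp only [map_add, hpψ, hmψ, map_smul, map_neg, smul_eq_mul, h1, h2]
    ring
  -- relation (II): Λ (ι' (ψ v)) = c * Λ (ι v)  (after cancelling A)
  have relII : ∀ v : V, A * Λ (ι' (ψ v)) = c * (A * Λ (ι v)) := by
    intro v
    have h := key2 (ψ v)
    have hψψ : ψ (ψ v) = (α : E) • v := by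
      have := congrArg (fun f : Module.End E V => f v) hα
      simpa [Module.End.mul_apply] using this
    rw [hψψ, map_smul, hE] at h
    have h3 := congrArg Λ h
    simp only [map_smul, smul_eq_mul] at h3
    exact h3
  have relIII : ∀ v : V, c * Λ (ι v) = s * Λ' (ι' v) := by
    intro v
    have h := relII v
    rw [relI v] at h
    have h2 : A * (s * Λ' (ι' v)) = A * (c * Λ (ι v)) := by linear_combination h
    exact (mul_left_cancel₀ hAne h2).symm
  -- find a good vector
  obtain ⟨v₀, hv₀⟩ := hΛne
  obtain ⟨v₁, hv₁⟩ := hbij.2 v₀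
  have hΛ'v₁ : Λ' (ι' v₁) ≠ 0 := by
    intro h0
    apply hv₀
    rw [← hv₁, relI v₁, h0, mul_zero]
  have hΛv₁ : c * Λ (ι v₁) ≠ 0 := by
    rw [relIII v₁]; exact mul_ne_zero hsne hΛ'v₁
  have hcne : c ≠ 0 := fun h => hΛv₁ (by rw [h, zero_mul])
  obtain ⟨ω, hω1, hω2⟩ := hω
  obtain ⟨a, ha⟩ := hω1 v₁
  obtain ⟨b, hb⟩ := hω2 v₁
  have hbne : b ≠ 0 := by
    intro h
    rw [h] at hb; simp at hb
    exact hΛ'v₁ hb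
  have hane : a ≠ 0 := by
    intro h
    rw [h] at ha; simp at ha
    exact hΛv₁ (by rw [ha, mul_zero])
  -- s = c * algebraMap (a / b)
  have hbC : algebraMap E ℂ b ≠ 0 := by simpa [map_eq_zero] using hbne
  have hscb : s = c * algebraMap E ℂ (a / b) := by
    have h := relIII v₁
    rw [ha, hb] at h
    have h2 : (ω : ℂ) * (c * algebraMap E ℂ a) = (ω : ℂ) * (s * algebraMap E ℂ b) := by
      linear_combination h
    have h3 := mul_left_cancel₀ ω.ne_zero h2
    rw [map_div₀, ← mul_div_assoc, eq_div_iff hbC]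
    linear_combination -h3
  -- now prove the set equality
  set e : E := a / b with he
  have hene : e ≠ 0 := div_ne_zero hane hbne
  have hcs : c = s * (algebraMap E ℂ e)⁻¹ := by
    rw [hscb]
    have : algebraMap E ℂ e ≠ 0 := by simpa [map_eq_zero] using hene
    field_simp
  ext x
  simp only [Set.mem_range]
  constructor
  · rintro ⟨v, rfl⟩
    refine ⟨(((α⁻¹ : Eˣ) : E) * e⁻¹) • ψ v, ?_⟩
    have h := key2 v
    have hv : ι' v = (A⁻¹ * c) • ι (ψ v) := by
      rw [mul_smul, ← h, smul_smul, inv_mul_cancel₀ hAne, one_smul]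
    have h1 : algebraMap E ℂ ((α⁻¹ : Eˣ) : E) = A⁻¹ := by
      rw [hA, Units.val_inv_eq_inv_val, map_inv₀]
    have haeC : algebraMap E ℂ e ≠ 0 := by simpa [map_eq_zero] using hene
    rw [hv, hcs, map_smul, hE, smul_smul]
    congr 1
    rw [map_mul, h1, map_inv₀]
    ring
  · rintro ⟨v, rfl⟩
    obtain ⟨w, hw⟩ := hbij.2 (e • v)
    refine ⟨(α : E) • w, ?_⟩
    have h := key2 w
    rw [hw, map_smul, hE e (ι v)] at h
    rw [map_smul, hE ((α : E)) (ι' w), ← hA, h, hcs, smul_smul]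
    congr 1
    have haeC : algebraMap E ℂ e ≠ 0 := by simpa [map_eq_zero] using hene
    field_simp
end
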